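/- arXiv:1508.02841 — 7 statements merged into one kernel-verified Lean document; each statement's English description precedes it below -/
import Mathlib

section
/- Fix τ ≥ 0. Let (β₀⁽¹⁾, β₁⁽¹⁾) and (β₀⁽²⁾, β₁⁽²⁾) be two pairs of real parameters and let x₁, x₂ ∈ ℝ with x₁ ≠ x₂. If L₀(β₀⁽¹⁾ + β₁⁽¹⁾xᵢ, (β₁⁽¹⁾)²τ²) = L₀(β₀⁽²⁾ + β₁⁽²⁾xᵢ, (β₁⁽²⁾)²τ²) for i = 1, 2, then (β₀⁽¹⁾, β₁⁽¹⁾) = (β₀⁽²⁾, β₁⁽²⁾). (Identifiability of the functional Berkson logistic model with known error variance: if the two parameter vectors induce the same response distribution at all design points and the design points are not all equal, the parameters coincide.) -/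
/-!
Writing `u = x - ξ`, the model value `L0 (β₀ + β₁ x) (β₁² τ²)` is the expectation of
`sigmoid (β₀ + β₁ u)` under `u ~ N(x, τ²)`. For `τ = 0`, or for equal slopes, `L0` is strictly
increasing in its first argument, so the two lines agree at `x₁` and `x₂` and hence coincide.
For `τ ≠ 0` and different slopes, the difference of the two sigmoids changes sign exactly once,
while the Gaussian location family has a strictly monotone likelihood ratio. A function with one
sign change that integrates to zero against `N(x₁, τ²)` then integrates to a positive number
against `N(x₂, τ²)`, so the model values cannot agree at both points.
-/

open MeasureTheory ProbabilityTheory Real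

/-- `L0 x v` is the smoothed logistic function: the expectation of the logistic
function `exp (x - ξ) / (1 + exp (x - ξ))` where `ξ ~ N(0, v)`. -/
noncomputable def L0 (x v : ℝ) : ℝ :=
  ∫ t, Real.exp (x - t) / (1 + Real.exp (x - t))
    ∂(gaussianReal 0 (Real.toNNReal v))

/-- `Lk k x v` is the `k`-th partial derivative of `L0` with respect to `x`. -/
noncomputable def Lk (k : ℕ) (x v : ℝ) : ℝ :=
  iteratedDeriv k (fun y => L0 y v) x

open scoped NNReal

lemma exp_div_one_add_exp (y : ℝ) : exp y / (1 + exp y) = sigmoid y := by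
  rw [sigmoid_def, exp_neg]
  field_simp
  ring

lemma abs_sigmoid_sub_sigmoid_le_one (a b : ℝ) : |sigmoid a - sigmoid b| ≤ 1 :=
  abs_sub_le_iff.2 ⟨by linarith [sigmoid_lt_one a, sigmoid_pos b],
    by linarith [sigmoid_lt_one b, sigmoid_pos a]⟩

lemma StrictMono.mul_sub_pos {f : ℝ → ℝ} (hf : StrictMono f) {a b : ℝ} (hab : a ≠ b) :
    0 < (a - b) * (f a - f b) := by
  rcases hab.lt_or_gt with h | h
  · exact mul_pos_of_neg_of_neg (sub_neg.2 h) (sub_neg.2 (hf h))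
  · exact mul_pos (sub_pos.2 h) (sub_pos.2 (hf h))

lemma integrable_sigmoid_comp {α : Type*} [MeasurableSpace α] {μ : Measure α} [IsFiniteMeasure μ]
    {f : α → ℝ} (hf : Measurable f) : Integrable (fun a => sigmoid (f a)) μ :=
  (integrable_const 1).mono' (continuous_sigmoid.measurable.comp hf).aestronglyMeasurable
    (ae_of_all _ fun a => by rw [norm_of_nonneg (sigmoid_nonneg _)]; exact sigmoid_le_one _)

lemma integral_pos_of_ae_pos {α : Type*} [MeasurableSpace α] {μ : Measure α} [NeZero μ]
    {f : α → ℝ} (hf : Integrable f μ) (hpos : ∀ᵐ a ∂μ, 0 < f a) : 0 < ∫ a, f a ∂μ := by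
  refine (integral_pos_iff_support_of_nonneg_ae (hpos.mono fun _ ha => ha.le) hf).2 ?_
  refine pos_iff_ne_zero.2 fun hzero => ?_
  have : (ae μ).NeBot := ae_neBot.2 (NeZero.ne μ)
  obtain ⟨a, hfa, hza⟩ := (hpos.and (measure_eq_zero_iff_ae_notMem.1 hzero)).exists
  exact hza hfa.ne'

lemma integral_mul_pos_of_sign_change {μ : Measure ℝ} [NeZero μ] [NullSingletonClass μ]
    {p₁ p₂ h : ℝ → ℝ} {u₀ : ℝ} (hp₁ : ∀ u, 0 < p₁ u)
    (hratio : StrictMono fun u => p₂ u / p₁ u) (hh : ∀ u ≠ u₀, 0 < (u - u₀) * h u)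
    (hi₁ : Integrable (fun u => p₁ u * h u) μ) (hi₂ : Integrable (fun u => p₂ u * h u) μ)
    (h₀ : ∫ u, p₁ u * h u ∂μ = 0) : 0 < ∫ u, p₂ u * h u ∂μ := by
  -- With `K` the likelihood ratio at `u₀`, the weight `p₂ - K p₁` changes sign at `u₀` as `h` does.
  set K := p₂ u₀ / p₁ u₀
  have hw : ∀ u ≠ u₀, 0 < (u - u₀) * (p₂ u - K * p₁ u) := fun u hu => by
    have hK : p₂ u - K * p₁ u = (p₂ u / p₁ u - K) * p₁ u := by
      field_simp [(hp₁ u).ne']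
    rw [hK, ← mul_assoc]
    exact mul_pos (hratio.mul_sub_pos hu) (hp₁ u)
  have hprod : ∀ u ≠ u₀, 0 < (p₂ u - K * p₁ u) * h u := fun u hu => by
    have hsq : 0 < (u - u₀) ^ 2 * ((p₂ u - K * p₁ u) * h u) := by
      linear_combination mul_pos (hw u hu) (hh u hu)
    exact pos_of_mul_pos_right hsq (sq_nonneg _)
  calc 0 < ∫ u, (p₂ u - K * p₁ u) * h u ∂μ :=
        integral_pos_of_ae_pos ((hi₂.sub (hi₁.const_mul K)).congr
          (ae_of_all _ fun u => by simp only [Pi.sub_apply]; ring)) ((μ.ae_ne u₀).mono hprod)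
    _ = ∫ u, p₂ u * h u ∂μ - K * ∫ u, p₁ u * h u ∂μ := by
        simp only [sub_mul, mul_assoc]
        rw [integral_sub hi₂ (hi₁.const_mul K), integral_const_mul]
    _ = ∫ u, p₂ u * h u ∂μ := by rw [h₀, mul_zero, sub_zero]

lemma L0_eq_integral_sigmoid (y w : ℝ) : L0 y w = ∫ t, sigmoid t ∂gaussianReal y w.toNNReal := by
  rw [← sub_zero y, ← gaussianReal_map_const_sub, integral_map (by fun_prop) (by fun_prop), L0]
  simp only [exp_div_one_add_exp, sub_zero]

lemma strictMono_L0 (w : ℝ) : StrictMono fun y => L0 y w := by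
  intro y z hyz
  simp only [L0, exp_div_one_add_exp]
  have hint : ∀ y, Integrable (fun t => sigmoid (y - t)) (gaussianReal 0 w.toNNReal) :=
    fun y => integrable_sigmoid_comp (by fun_prop)
  rw [← sub_pos, ← integral_sub (hint z) (hint y)]
  exact integral_pos_of_ae_pos ((hint z).sub (hint y))
    (ae_of_all _ fun t => sub_pos.2 (sigmoid_strictMono (by linarith)))

lemma L0_affine_eq_integral (β₀ β₁ x τ : ℝ) :
    L0 (β₀ + β₁ * x) (β₁ ^ 2 * τ ^ 2)
      = ∫ u, sigmoid (β₀ + β₁ * u) ∂gaussianReal x (τ ^ 2).toNNReal := by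
  have hlaw : gaussianReal (β₀ + β₁ * x) (β₁ ^ 2 * τ ^ 2).toNNReal
      = ((gaussianReal x (τ ^ 2).toNNReal).map (β₁ * ·)).map (β₀ + ·) := by
    rw [gaussianReal_map_const_mul, gaussianReal_map_const_add, add_comm]
    congr
    ext
    simp [mul_nonneg, sq_nonneg]
  rw [L0_eq_integral_sigmoid, hlaw, Measure.map_map (by fun_prop) (by fun_prop),
    integral_map (by fun_prop) (by fun_prop)]
  rfl

lemma gaussianPDFReal_div_strictMono {x₁ x₂ : ℝ} {v : ℝ≥0} (hv : v ≠ 0) (hx : x₁ < x₂) :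
    StrictMono fun u => gaussianPDFReal x₂ v u / gaussianPDFReal x₁ v u := by
  have hratio : ∀ u, gaussianPDFReal x₂ v u / gaussianPDFReal x₁ v u
      = exp ((x₂ - x₁) / v * u + (x₁ ^ 2 - x₂ ^ 2) / (2 * v)) := by
    intro u
    rw [gaussianPDFReal, gaussianPDFReal, mul_div_mul_left _ _ (by positivity), ← exp_sub]
    congr 1
    field_simp
    ring
  simp only [hratio]
  exact exp_strictMono.comp
    ((strictMono_mul_left_of_pos (div_pos (sub_pos.2 hx) (by positivity))).add_const _)

lemma exists_sign_change_sigmoid_affine_sub {a₁ b₁ a₂ b₂ : ℝ} (hb : b₁ ≠ b₂) :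
    ∃ u₀, ∀ u ≠ u₀,
      0 < (u - u₀) * ((b₁ - b₂) * (sigmoid (a₁ + b₁ * u) - sigmoid (a₂ + b₂ * u))) := by
  have hb' : b₁ - b₂ ≠ 0 := sub_ne_zero.2 hb
  refine ⟨(a₂ - a₁) / (b₁ - b₂), fun u hu => ?_⟩
  have hline : (u - (a₂ - a₁) / (b₁ - b₂)) * (b₁ - b₂) = (a₁ + b₁ * u) - (a₂ + b₂ * u) := by
    field_simp
    ring
  rw [← mul_assoc, hline]
  refine sigmoid_strictMono.mul_sub_pos fun heq => hu ?_
  exact sub_eq_zero.1 ((mul_eq_zero.1 (hline.trans (sub_eq_zero.2 heq))).resolve_right hb')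

lemma slope_eq_of_L0_affine_eq {τ β₀₁ β₁₁ β₀₂ β₁₂ x₁ x₂ : ℝ} (hτ : τ ≠ 0) (hx : x₁ ≠ x₂)
    (h₁ : L0 (β₀₁ + β₁₁ * x₁) (β₁₁ ^ 2 * τ ^ 2) = L0 (β₀₂ + β₁₂ * x₁) (β₁₂ ^ 2 * τ ^ 2))
    (h₂ : L0 (β₀₁ + β₁₁ * x₂) (β₁₁ ^ 2 * τ ^ 2) = L0 (β₀₂ + β₁₂ * x₂) (β₁₂ ^ 2 * τ ^ 2)) :
    β₁₁ = β₁₂ := by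
  by_contra hb
  wlog hlt : x₁ < x₂ generalizing x₁ x₂
  · exact this hx.symm h₂ h₁ (hx.symm.lt_of_le (not_lt.1 hlt))
  set v := (τ ^ 2).toNNReal
  have hv : v ≠ 0 := by simpa [v] using hτ
  set h : ℝ → ℝ := fun u => (β₁₁ - β₁₂) * (sigmoid (β₀₁ + β₁₁ * u) - sigmoid (β₀₂ + β₁₂ * u))
  have hint : ∀ x, Integrable (fun u => gaussianPDFReal x v u * h u) := fun x =>
    (integrable_gaussianPDFReal x v).mul_bdd (by fun_prop) (ae_of_all _ fun u => by
      rw [norm_mul, norm_eq_abs, norm_eq_abs]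
      exact mul_le_of_le_one_right (abs_nonneg _) (abs_sigmoid_sub_sigmoid_le_one _ _))
  have hdiff : ∀ x, ∫ u, gaussianPDFReal x v u * h u = (β₁₁ - β₁₂) *
      (L0 (β₀₁ + β₁₁ * x) (β₁₁ ^ 2 * τ ^ 2) - L0 (β₀₂ + β₁₂ * x) (β₁₂ ^ 2 * τ ^ 2)) := fun x => by
    rw [L0_affine_eq_integral, L0_affine_eq_integral, ← integral_sub
      (integrable_sigmoid_comp (by fun_prop)) (integrable_sigmoid_comp (by fun_prop)),
      ← integral_const_mul, integral_gaussianReal_eq_integral_smul hv]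
    rfl
  obtain ⟨u₀, hsign⟩ := exists_sign_change_sigmoid_affine_sub (a₁ := β₀₁) (a₂ := β₀₂) hb
  have hpos := integral_mul_pos_of_sign_change (fun u => gaussianPDFReal_pos _ _ u hv)
    (gaussianPDFReal_div_strictMono hv hlt) hsign (hint x₁) (hint x₂)
    (by rw [hdiff, h₁, sub_self, mul_zero])
  rw [hdiff, h₂, sub_self, mul_zero] at hpos
  exact hpos.false

theorem stmt_0_general (τ : ℝ)
    (β₀₁ β₁₁ β₀₂ β₁₂ x₁ x₂ : ℝ) (hx : x₁ ≠ x₂)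
    (h1 : L0 (β₀₁ + β₁₁ * x₁) (β₁₁ ^ 2 * τ ^ 2)
        = L0 (β₀₂ + β₁₂ * x₁) (β₁₂ ^ 2 * τ ^ 2))
    (h2 : L0 (β₀₁ + β₁₁ * x₂) (β₁₁ ^ 2 * τ ^ 2)
        = L0 (β₀₂ + β₁₂ * x₂) (β₁₂ ^ 2 * τ ^ 2)) :
    β₀₁ = β₀₂ ∧ β₁₁ = β₁₂ := by
  have hvar : β₁₁ ^ 2 * τ ^ 2 = β₁₂ ^ 2 * τ ^ 2 := by
    rcases eq_or_ne τ 0 with rfl | hτ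
    · ring
    · rw [slope_eq_of_L0_affine_eq hτ hx h1 h2]
  rw [hvar] at h1 h2
  have e1 := (strictMono_L0 _).injective h1
  have e2 := (strictMono_L0 _).injective h2
  have hslope : β₁₁ = β₁₂ := by
    have hprod : (β₁₁ - β₁₂) * (x₁ - x₂) = 0 := by linear_combination e1 - e2
    exact sub_eq_zero.1 ((mul_eq_zero.1 hprod).resolve_right (sub_ne_zero.2 hx))
  exact ⟨by linear_combination e1 - x₁ * hslope, hslope⟩

/-- Identifiability of the functional Berkson logistic model with known
error variance: two distinct design points suffice. -/
theorem stmt_0 (τ : ℝ) (hτ : 0 ≤ τ)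
    (β₀₁ β₁₁ β₀₂ β₁₂ x₁ x₂ : ℝ) (hx : x₁ ≠ x₂)
    (h1 : L0 (β₀₁ + β₁₁ * x₁) (β₁₁ ^ 2 * τ ^ 2)
        = L0 (β₀₂ + β₁₂ * x₁) (β₁₂ ^ 2 * τ ^ 2))
    (h2 : L0 (β₀₁ + β₁₁ * x₂) (β₁₁ ^ 2 * τ ^ 2)
        = L0 (β₀₂ + β₁₂ * x₂) (β₁₂ ^ 2 * τ ^ 2)) :
    β₀₁ = β₀₂ ∧ β₁₁ = β₁₂ :=
  stmt_0_general τ β₀₁ β₁₁ β₀₂ β₁₂ x₁ x₂ hx h1 h2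
end

section
/- Let η be a real random variable with E|η|³ < ∞ and let ξ ~ N(0, 1) be independent of η. Let p_ζ denote the probability density of ζ = ξ + η, so p_ζ(z) = (1/√(2π)) E[e^{−(z−η)²/2}]. Then z ↦ ln p_ζ(z) is three times differentiable and for every z ∈ ℝ, d³/dz³ (ln p_ζ(z)) = m₃(z) − 3 m₂(z) m₁(z) + 2 m₁(z)³, where mₖ(z) = E[ηᵏ e^{−(z−η)²/2}] / E[e^{−(z−η)²/2}] is the k-th moment of the conditional distribution of η given ζ = z; that is, the third logarithmic derivative of the density of ζ equals the third conditional central moment μ₃[η | ζ = z]. -/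
/-!
Write `M k z = E[ηᵏ exp (−(z−η)²/2)]`, so that `p_ζ = M 0 / √(2π)` and `mₖ = M k / M 0`.
Differentiating under the integral sign gives `M k' = M (k+1) − z M k`, hence
`mₖ' = mₖ₊₁ − mₖ m₁`. Consequently `(ln p_ζ)' = m₁ − z`, `(ln p_ζ)'' = m₂ − m₁² − 1`, and
one more differentiation produces the third conditional central moment
`m₃ − 3 m₂ m₁ + 2 m₁³`.
-/

open MeasureTheory Real

lemma abs_mul_exp_neg_sq_div_two_le_one (x : ℝ) : |x| * exp (-x ^ 2 / 2) ≤ 1 := by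
  have hx : |x| ≤ exp (x ^ 2 / 2) := by
    refine le_trans ?_ (add_one_le_exp _)
    nlinarith [sq_nonneg (|x| - 1), sq_abs x]
  calc |x| * exp (-x ^ 2 / 2) ≤ exp (x ^ 2 / 2) * exp (-(x ^ 2 / 2)) := by
        rw [neg_div]; gcongr
    _ = 1 := by rw [← exp_add, add_neg_cancel, exp_zero]

lemma exp_neg_sq_div_two_le_one (x : ℝ) : exp (-x ^ 2 / 2) ≤ 1 := by
  rw [exp_le_one_iff, neg_div, neg_nonpos]
  positivity

lemma integrable_pow_of_integrable_abs_pow {Ω : Type*} [MeasurableSpace Ω] {P : Measure Ω}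
    [IsFiniteMeasure P] {η : Ω → ℝ} (hη : Measurable η) {n k : ℕ}
    (hn : Integrable (fun ω => |η ω| ^ n) P) (hk : k ≤ n) :
    Integrable (fun ω => η ω ^ k) P :=
  (integrable_norm_iff (by fun_prop)).1 <| by
    simpa [norm_pow] using integrable_norm_pow_of_le hη.aestronglyMeasurable hk
      (by simpa using hn)

noncomputable section

namespace GaussianSmoothing

variable {Ω : Type*} [MeasurableSpace Ω] (P : Measure Ω) (η : Ω → ℝ)

def gaussMoment (k : ℕ) (z : ℝ) : ℝ :=
  ∫ ω, η ω ^ k * exp (-(z - η ω) ^ 2 / 2) ∂P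

def condMoment (k : ℕ) (z : ℝ) : ℝ :=
  gaussMoment P η k z / gaussMoment P η 0 z

variable {P η}

lemma integrable_pow_mul_exp (hη : Measurable η) {k : ℕ}
    (hk : Integrable (fun ω => η ω ^ k) P) (z : ℝ) :
    Integrable (fun ω => η ω ^ k * exp (-(z - η ω) ^ 2 / 2)) P := by
  refine hk.mul_bdd (c := 1) (by fun_prop) (Filter.Eventually.of_forall fun ω => ?_)
  rw [norm_of_nonneg (exp_pos _).le]
  exact exp_neg_sq_div_two_le_one _

lemma gaussMoment_zero_pos [IsFiniteMeasure P] [NeZero P] (hη : Measurable η) (z : ℝ) :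
    0 < gaussMoment P η 0 z := by
  simp only [gaussMoment, pow_zero, one_mul, neg_div]
  refine integral_exp_pos ?_
  simpa [neg_div] using integrable_pow_mul_exp (k := 0) hη (by simp) z

lemma hasDerivAt_gaussMoment (hη : Measurable η) {k : ℕ}
    (hk : Integrable (fun ω => η ω ^ k) P) (hk1 : Integrable (fun ω => η ω ^ (k + 1)) P)
    (z : ℝ) :
    HasDerivAt (gaussMoment P η k)
      (gaussMoment P η (k + 1) z - z * gaussMoment P η k z) z := by
  have hderiv : ∀ ω t, HasDerivAt (fun t => η ω ^ k * exp (-(t - η ω) ^ 2 / 2))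
      (η ω ^ k * ((η ω - t) * exp (-(t - η ω) ^ 2 / 2))) t := by
    intro ω t
    have hq : HasDerivAt (fun t => -(t - η ω) ^ 2 / 2) (η ω - t) t := by
      have : HasDerivAt (fun t => -(t - η ω) ^ 2 / 2) _ t :=
        (((hasDerivAt_id' t).sub_const (η ω)).pow 2).neg.div_const 2
      refine this.congr_deriv ?_
      ring
    refine (hq.exp.const_mul (η ω ^ k)).congr_deriv ?_
    ring
  -- `|η − t| exp (−(t−η)²/2) ≤ 1` makes `|η|ᵏ` a dominating function uniform in `t`
  have hbound : ∀ ω t, ‖η ω ^ k * ((η ω - t) * exp (-(t - η ω) ^ 2 / 2))‖ ≤ ‖η ω ^ k‖ := by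
    intro ω t
    rw [norm_mul, norm_mul, norm_of_nonneg (exp_pos _).le, Real.norm_eq_abs (η ω - t),
      ← sq_abs (t - η ω), abs_sub_comm, sq_abs]
    exact mul_le_of_le_one_right (norm_nonneg _) (abs_mul_exp_neg_sq_div_two_le_one _)
  obtain ⟨-, hD⟩ := hasDerivAt_integral_of_dominated_loc_of_deriv_le (μ := P) (x₀ := z)
    Filter.univ_mem (Filter.Eventually.of_forall fun t => (by fun_prop))
    (integrable_pow_mul_exp hη hk z) (by fun_prop)
    (Filter.Eventually.of_forall fun ω t _ => hbound ω t) hk.norm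
    (Filter.Eventually.of_forall fun ω t _ => hderiv ω t)
  refine hD.congr_deriv ?_
  rw [gaussMoment, gaussMoment, ← integral_const_mul, ← integral_sub
    (integrable_pow_mul_exp hη hk1 z) ((integrable_pow_mul_exp hη hk z).const_mul z)]
  congr 1 with ω
  ring

variable [IsFiniteMeasure P] [NeZero P]

lemma hasDerivAt_condMoment (hη : Measurable η) (h1 : Integrable η P) {k : ℕ}
    (hk : Integrable (fun ω => η ω ^ k) P) (hk1 : Integrable (fun ω => η ω ^ (k + 1)) P)
    (z : ℝ) :
    HasDerivAt (condMoment P η k)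
      (condMoment P η (k + 1) z - condMoment P η k z * condMoment P η 1 z) z := by
  have h0 := (gaussMoment_zero_pos (P := P) hη z).ne'
  refine HasDerivAt.congr_deriv (f := condMoment P η k) ((hasDerivAt_gaussMoment hη hk hk1 z).div
    (hasDerivAt_gaussMoment hη (by simp) (by simpa using h1) z) h0) ?_
  simp only [condMoment, zero_add]
  field_simp
  ring

lemma hasDerivAt_log_const_mul_gaussMoment_zero (hη : Measurable η) (h1 : Integrable η P)
    {c : ℝ} (hc : c ≠ 0) (z : ℝ) :
    HasDerivAt (fun t => log (c * gaussMoment P η 0 t)) (condMoment P η 1 z - z) z := by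
  have h0 := (gaussMoment_zero_pos (P := P) hη z).ne'
  refine (((hasDerivAt_gaussMoment hη (by simp) (by simpa using h1) z).const_mul c).log
    (mul_ne_zero hc h0)).congr_deriv ?_
  simp only [condMoment, zero_add]
  field_simp

lemma hasDerivAt_condMoment_two_sub_sq (hη : Measurable η) (h1 : Integrable η P)
    (h2 : Integrable (fun ω => η ω ^ 2) P) (h3 : Integrable (fun ω => η ω ^ 3) P) (z : ℝ) :
    HasDerivAt (fun t => condMoment P η 2 t - condMoment P η 1 t ^ 2)
      (condMoment P η 3 z - 3 * condMoment P η 2 z * condMoment P η 1 z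
        + 2 * condMoment P η 1 z ^ 3) z := by
  refine ((hasDerivAt_condMoment hη h1 h2 h3 z).sub
    ((hasDerivAt_condMoment hη h1 (by simpa using h1) h2 z).pow 2)).congr_deriv ?_
  push_cast
  ring

end GaussianSmoothing

end

open GaussianSmoothing in
/-- Third logarithmic derivative of the density of `ζ = ξ + η`, `ξ ~ N(0,1)`
independent of `η`: with `p_ζ(z) = (1/√(2π)) E[exp (−(z−η)²/2)]` and
`mₖ(z) = E[ηᵏ exp (−(z−η)²/2)] / E[exp (−(z−η)²/2)]` (the `k`-th conditional
moment of `η` given `ζ = z`), `ln p_ζ` is three times differentiable and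
`(ln p_ζ)‴(z) = m₃(z) − 3 m₂(z) m₁(z) + 2 m₁(z)³`, the third conditional
central moment `μ₃[η ∣ ζ = z]`. -/
theorem stmt_11 {Ω : Type*} [MeasurableSpace Ω] (P : Measure Ω) [IsProbabilityMeasure P]
    (η : Ω → ℝ) (hη : Measurable η)
    (hη3 : Integrable (fun ω => |η ω| ^ 3) P)
    (pζ : ℝ → ℝ)
    (hpζ : ∀ z : ℝ, pζ z
      = (Real.sqrt (2 * Real.pi))⁻¹ * ∫ ω, Real.exp (-(z - η ω) ^ 2 / 2) ∂P)
    (m : ℕ → ℝ → ℝ)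
    (hm : ∀ (k : ℕ) (z : ℝ), m k z
      = (∫ ω, (η ω) ^ k * Real.exp (-(z - η ω) ^ 2 / 2) ∂P)
        / ∫ ω, Real.exp (-(z - η ω) ^ 2 / 2) ∂P) :
    (∀ z : ℝ, DifferentiableAt ℝ (fun t => Real.log (pζ t)) z) ∧
    (∀ z : ℝ, DifferentiableAt ℝ (deriv (fun t => Real.log (pζ t))) z) ∧
    (∀ z : ℝ, DifferentiableAt ℝ (deriv (deriv (fun t => Real.log (pζ t)))) z) ∧
    (∀ z : ℝ, iteratedDeriv 3 (fun t => Real.log (pζ t)) z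
      = m 3 z - 3 * m 2 z * m 1 z + 2 * (m 1 z) ^ 3) := by
  have hlog : (fun t => log (pζ t)) = fun t => log ((√(2 * π))⁻¹ * gaussMoment P η 0 t) := by
    ext z; simp [hpζ, gaussMoment]
  obtain rfl : m = condMoment P η := by
    ext k z; simp [hm, condMoment, gaussMoment]
  have hint : ∀ k ≤ 3, Integrable (fun ω => η ω ^ k) P := fun k hk =>
    integrable_pow_of_integrable_abs_pow hη hη3 hk
  have h1 : Integrable η P := by simpa using hint 1 (by norm_num)
  have hasDeriv₁ : ∀ z, HasDerivAt (fun t => log ((√(2 * π))⁻¹ * gaussMoment P η 0 t))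
      (condMoment P η 1 z - z) z :=
    hasDerivAt_log_const_mul_gaussMoment_zero hη h1 (by positivity)
  have hasDeriv₂ : ∀ z, HasDerivAt (fun t => condMoment P η 1 t - t)
      (condMoment P η 2 z - condMoment P η 1 z ^ 2 - 1) z := fun z =>
    ((hasDerivAt_condMoment hη h1 (hint 1 (by norm_num)) (hint 2 (by norm_num)) z).sub
      (hasDerivAt_id z)).congr_deriv (by ring)
  have hasDeriv₃ : ∀ z, HasDerivAt (fun t => condMoment P η 2 t - condMoment P η 1 t ^ 2 - 1)
      (condMoment P η 3 z - 3 * condMoment P η 2 z * condMoment P η 1 z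
        + 2 * condMoment P η 1 z ^ 3) z := fun z =>
    (hasDerivAt_condMoment_two_sub_sq hη h1 (hint 2 (by norm_num)) (hint 3 le_rfl) z).sub_const 1
  have deriv₁ := funext fun z => (hasDeriv₁ z).deriv
  have deriv₂ : deriv (deriv fun t => log ((√(2 * π))⁻¹ * gaussMoment P η 0 t))
      = fun z => condMoment P η 2 z - condMoment P η 1 z ^ 2 - 1 := by
    rw [deriv₁]; exact funext fun z => (hasDeriv₂ z).deriv
  rw [hlog]
  refine ⟨fun z => (hasDeriv₁ z).differentiableAt,
    fun z => deriv₁ ▸ (hasDeriv₂ z).differentiableAt,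
    fun z => deriv₂ ▸ (hasDeriv₃ z).differentiableAt, fun z => ?_⟩
  rw [iteratedDeriv_succ, iteratedDeriv_succ, iteratedDeriv_one, deriv₂]
  exact (hasDeriv₃ z).deriv
end

section
/- Let η be a real random variable with E|η|³ < ∞ and let ξ ~ N(μ, σ²), σ > 0, be independent of η. Let p_ζ denote the probability density of ζ = ξ + η. Then for every z ∈ ℝ, d³/dz³ (ln p_ζ(z)) = (1/σ⁶) · (m₃(z) − 3 m₂(z) m₁(z) + 2 m₁(z)³), where mₖ(z) = E[ηᵏ e^{−(z−μ−η)²/(2σ²)}] / E[e^{−(z−μ−η)²/(2σ²)}] is the k-th conditional moment of η given ζ = z; that is, d³/dz³ ln p_ζ(z) = σ⁻⁶ μ₃[η | ζ = z]. -/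
/-!
Put `K(u) = exp (-u² / (2σ²))` and `Gₖ(x) = E[ηᵏ K(x - μ - η)]`, so that `p_ζ = G₀ / (√(2π) σ)`
and `mₖ = Gₖ / G₀`. Since `K'(u) = -u K(u) / σ²` and `|u| K(u) ≤ σ`, one may differentiate under
the expectation as long as `E|η|ᵏ⁺¹ < ∞`, which gives `Gₖ' = (Gₖ₊₁ - (x - μ) Gₖ) / σ²`. Hence
`(ln p_ζ)' = (m₁ - (x - μ)) / σ²` and `mₖ' = (mₖ₊₁ - mₖ m₁) / σ²`, and two more differentiations
produce the third cumulant `m₃ - 3 m₂ m₁ + 2 m₁³` divided by `σ⁶`.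
-/

open MeasureTheory ProbabilityTheory Real

noncomputable def gaussKernel (σ u : ℝ) : ℝ := exp (-u ^ 2 / (2 * σ ^ 2))

namespace gaussKernel

variable (σ : ℝ)

lemma pos (u : ℝ) : 0 < gaussKernel σ u := exp_pos _

lemma le_one (u : ℝ) : gaussKernel σ u ≤ 1 :=
  exp_le_one_iff.2 (div_nonpos_of_nonpos_of_nonneg (neg_nonpos.2 (sq_nonneg u)) (by positivity))

@[fun_prop]
lemma continuous : Continuous (gaussKernel σ) := by
  unfold gaussKernel
  fun_prop

lemma hasDerivAt (u : ℝ) : HasDerivAt (gaussKernel σ) (-u / σ ^ 2 * gaussKernel σ u) u := by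
  have h := ((hasDerivAt_pow 2 u).neg.div_const (2 * σ ^ 2)).exp
  refine h.congr_deriv ?_
  simp only [gaussKernel, Pi.neg_apply]
  ring

-- From `1 + t ≤ exp t` at `t = u² / (2σ²)` and `|u| ≤ σ + u² / (2σ)`.
lemma abs_mul_le {σ : ℝ} (hσ : 0 < σ) (u : ℝ) : |u| * gaussKernel σ u ≤ σ := by
  set t := u ^ 2 / (2 * σ ^ 2)
  have hu : |u| ≤ σ * (t + 1) := by
    have : σ * (t + 1) = σ + |u| ^ 2 / (2 * σ) := by
      simp only [t, sq_abs]
      field_simp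
      ring
    rw [this, ← sub_nonneg]
    have : σ + |u| ^ 2 / (2 * σ) - |u| = (|u| - σ) ^ 2 / (2 * σ) + σ / 2 := by
      field_simp
      ring
    rw [this]
    positivity
  have hK : gaussKernel σ u = (exp t)⁻¹ := by
    rw [gaussKernel, neg_div, exp_neg]
  rw [hK, ← div_eq_mul_inv, div_le_iff₀ (exp_pos t)]
  exact hu.trans (mul_le_mul_of_nonneg_left (add_one_le_exp t) hσ.le)

end gaussKernel

lemma hasDerivAt_pow_mul_gaussKernel (σ μ y : ℝ) (k : ℕ) (x : ℝ) :
    HasDerivAt (fun x => y ^ k * gaussKernel σ (x - μ - y))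
      ((y ^ (k + 1) * gaussKernel σ (x - μ - y) - (x - μ) * (y ^ k * gaussKernel σ (x - μ - y)))
        / σ ^ 2) x := by
  refine (((gaussKernel.hasDerivAt σ _).comp x
    (((hasDerivAt_id x).sub_const μ).sub_const y)).const_mul (y ^ k)).congr_deriv ?_
  simp only [id, mul_one]
  ring

lemma abs_deriv_pow_mul_gaussKernel_le {σ : ℝ} (hσ : 0 < σ) (μ y : ℝ) (k : ℕ) (x : ℝ) :
    |(y ^ (k + 1) * gaussKernel σ (x - μ - y) - (x - μ) * (y ^ k * gaussKernel σ (x - μ - y)))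
        / σ ^ 2| ≤ |y| ^ k / σ := by
  have hσ2 : 0 < σ ^ 2 := by positivity
  calc _ = |y| ^ k * (|x - μ - y| * gaussKernel σ (x - μ - y)) / σ ^ 2 := by
        rw [show y ^ (k + 1) * gaussKernel σ (x - μ - y)
            - (x - μ) * (y ^ k * gaussKernel σ (x - μ - y))
            = -(y ^ k * ((x - μ - y) * gaussKernel σ (x - μ - y))) by ring]
        simp only [abs_div, abs_neg, abs_mul, abs_pow, abs_of_pos hσ2,
          abs_of_pos (gaussKernel.pos σ _)]
    _ ≤ |y| ^ k * σ / σ ^ 2 := by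
        gcongr
        exact gaussKernel.abs_mul_le hσ _
    _ = |y| ^ k / σ := by field_simp

lemma integrable_abs_pow_of_le {Ω : Type*} [MeasurableSpace Ω] {P : Measure Ω} [IsFiniteMeasure P]
    {η : Ω → ℝ} (hη : AEStronglyMeasurable η P) {n k : ℕ}
    (hn : Integrable (fun ω => |η ω| ^ n) P) (hk : k ≤ n) :
    Integrable (fun ω => |η ω| ^ k) P := by
  rcases Nat.eq_zero_or_pos n with rfl | hn0
  · simp_all
  have hLp : MemLp η n P := by
    rw [← integrable_norm_rpow_iff hη (by simp; omega) (by simp)]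
    simpa using hn
  simpa using (hLp.mono_exponent (by exact_mod_cast hk)).integrable_norm_pow'

section GaussMoment

variable {Ω : Type*} [MeasurableSpace Ω] (P : Measure Ω) (η : Ω → ℝ) (μ σ : ℝ)

noncomputable def gaussMoment (k : ℕ) (x : ℝ) : ℝ :=
  ∫ ω, η ω ^ k * gaussKernel σ (x - μ - η ω) ∂P

noncomputable def condMoment (k : ℕ) (x : ℝ) : ℝ :=
  gaussMoment P η μ σ k x / gaussMoment P η μ σ 0 x

variable {P η μ σ}

lemma integrable_pow_mul_gaussKernel (hη : Measurable η) {k : ℕ}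
    (hk : Integrable (fun ω => |η ω| ^ k) P) (x : ℝ) :
    Integrable (fun ω => η ω ^ k * gaussKernel σ (x - μ - η ω)) P := by
  refine hk.mono' (by fun_prop) (Filter.Eventually.of_forall fun ω => ?_)
  rw [norm_mul, Real.norm_eq_abs, abs_pow, Real.norm_of_nonneg (gaussKernel.pos σ _).le]
  exact mul_le_of_le_one_right (by positivity) (gaussKernel.le_one σ _)

lemma hasDerivAt_gaussMoment (hσ : 0 < σ) (hη : Measurable η) {k : ℕ}
    (hk : Integrable (fun ω => |η ω| ^ k) P) (hk1 : Integrable (fun ω => |η ω| ^ (k + 1)) P)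
    (x : ℝ) :
    HasDerivAt (gaussMoment P η μ σ k)
      ((gaussMoment P η μ σ (k + 1) x - (x - μ) * gaussMoment P η μ σ k x) / σ ^ 2) x := by
  have hint : ∀ x, Integrable (fun ω => η ω ^ k * gaussKernel σ (x - μ - η ω)) P :=
    integrable_pow_mul_gaussKernel hη hk
  have hderiv := hasDerivAt_integral_of_dominated_loc_of_deriv_le (μ := P) (x₀ := x)
    (F' := fun x ω => (η ω ^ (k + 1) * gaussKernel σ (x - μ - η ω)
      - (x - μ) * (η ω ^ k * gaussKernel σ (x - μ - η ω))) / σ ^ 2)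
    Filter.univ_mem (Filter.Eventually.of_forall fun x => (hint x).1) (hint x) (by fun_prop)
    (Filter.Eventually.of_forall fun ω x _ =>
      abs_deriv_pow_mul_gaussKernel_le hσ μ (η ω) k x)
    (hk.div_const σ)
    (Filter.Eventually.of_forall fun ω x _ => hasDerivAt_pow_mul_gaussKernel σ μ (η ω) k x)
  refine hderiv.2.congr_deriv ?_
  rw [integral_div, integral_sub (integrable_pow_mul_gaussKernel hη hk1 x)
    ((hint x).const_mul _), integral_const_mul]
  rfl

lemma gaussMoment_zero_pos [IsFiniteMeasure P] [NeZero P] (hη : Measurable η) (x : ℝ) :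
    0 < gaussMoment P η μ σ 0 x := by
  have hint := integrable_pow_mul_gaussKernel (P := P) (σ := σ) (μ := μ) hη (k := 0) (by simp) x
  simp only [pow_zero, one_mul, gaussKernel] at hint
  simpa only [gaussMoment, pow_zero, one_mul, gaussKernel] using integral_exp_pos hint

lemma hasDerivAt_condMoment [IsFiniteMeasure P] [NeZero P] (hσ : 0 < σ) (hη : Measurable η)
    {k : ℕ} (hk1 : Integrable (fun ω => |η ω| ^ (k + 1)) P) (x : ℝ) :
    HasDerivAt (condMoment P η μ σ k)
      ((condMoment P η μ σ (k + 1) x - condMoment P η μ σ k x * condMoment P η μ σ 1 x) / σ ^ 2)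
      x := by
  have hle : ∀ j ≤ k + 1, Integrable (fun ω => |η ω| ^ j) P := fun j hj =>
    integrable_abs_pow_of_le hη.aestronglyMeasurable hk1 hj
  have hG := gaussMoment_zero_pos (P := P) (μ := μ) (σ := σ) hη x
  refine ((hasDerivAt_gaussMoment hσ hη (hle k (by omega)) hk1 x).div
    (hasDerivAt_gaussMoment hσ hη (hle 0 (by omega)) (hle 1 (by omega)) x) hG.ne').congr_deriv ?_
  simp only [condMoment, zero_add]
  field_simp
  ring

lemma hasDerivAt_log_const_mul_gaussMoment [IsFiniteMeasure P] [NeZero P] {c : ℝ} (hc : c ≠ 0)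
    (hσ : 0 < σ) (hη : Measurable η) (h1 : Integrable (fun ω => |η ω| ^ 1) P) (x : ℝ) :
    HasDerivAt (fun t => log (c * gaussMoment P η μ σ 0 t))
      ((condMoment P η μ σ 1 x - (x - μ)) / σ ^ 2) x := by
  have hG := gaussMoment_zero_pos (P := P) (μ := μ) (σ := σ) hη x
  refine (((hasDerivAt_gaussMoment hσ hη (by simp) h1 x).const_mul c).log
    (mul_ne_zero hc hG.ne')).congr_deriv ?_
  simp only [condMoment, zero_add]
  field_simp

theorem iteratedDeriv_three_log_const_mul_gaussMoment [IsFiniteMeasure P] [NeZero P] {c : ℝ}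
    (hc : c ≠ 0) (hσ : 0 < σ) (hη : Measurable η) (h3 : Integrable (fun ω => |η ω| ^ 3) P)
    (z : ℝ) :
    iteratedDeriv 3 (fun t => log (c * gaussMoment P η μ σ 0 t)) z
      = (condMoment P η μ σ 3 z - 3 * condMoment P η μ σ 2 z * condMoment P η μ σ 1 z
          + 2 * condMoment P η μ σ 1 z ^ 3) / σ ^ 6 := by
  set m := condMoment P η μ σ
  have hle : ∀ j ≤ 3, Integrable (fun ω => |η ω| ^ j) P := fun j hj =>
    integrable_abs_pow_of_le hη.aestronglyMeasurable h3 hj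
  have d1 : deriv (fun t => log (c * gaussMoment P η μ σ 0 t))
      = fun x => (m 1 x - (x - μ)) / σ ^ 2 :=
    funext fun x => (hasDerivAt_log_const_mul_gaussMoment hc hσ hη (hle 1 (by norm_num)) x).deriv
  have d2 : deriv (fun x => (m 1 x - (x - μ)) / σ ^ 2)
      = fun x => ((m 2 x - m 1 x ^ 2) / σ ^ 2 - 1) / σ ^ 2 := by
    funext x
    refine ((((hasDerivAt_condMoment (μ := μ) hσ hη (hle 2 (by norm_num)) x).sub
      ((hasDerivAt_id x).sub_const μ)).div_const (σ ^ 2))).deriv.trans ?_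
    simp only [m, Nat.reduceAdd]
    ring
  have d3 : HasDerivAt (fun x => ((m 2 x - m 1 x ^ 2) / σ ^ 2 - 1) / σ ^ 2)
      ((m 3 z - 3 * m 2 z * m 1 z + 2 * m 1 z ^ 3) / σ ^ 6) z := by
    refine ((((hasDerivAt_condMoment (μ := μ) hσ hη (hle 3 (by norm_num)) z).sub
      ((hasDerivAt_condMoment (μ := μ) hσ hη (hle 2 (by norm_num)) z).pow 2)).div_const
        (σ ^ 2)).sub_const 1).div_const (σ ^ 2) |>.congr_deriv ?_
    simp only [m, Nat.reduceAdd]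
    field_simp
    ring
  rw [iteratedDeriv_eq_iterate, Function.iterate_succ_apply', Function.iterate_succ_apply',
    Function.iterate_one, d1, d2, d3.deriv]

end GaussMoment

/-- Third logarithmic derivative of the density of `ζ = ξ + η`, where
`ξ ~ N(μ, σ²)`, `σ > 0`, is independent of `η`: with
`p_ζ(z) = (1/(√(2π)σ)) E[exp (−(z−μ−η)²/(2σ²))]` and
`mₖ(z) = E[ηᵏ exp (−(z−μ−η)²/(2σ²))] / E[exp (−(z−μ−η)²/(2σ²))]` the `k`-th
conditional moment of `η` given `ζ = z`, one has
`(ln p_ζ)‴(z) = σ⁻⁶ (m₃(z) − 3 m₂(z) m₁(z) + 2 m₁(z)³) = σ⁻⁶ μ₃[η ∣ ζ = z]`. -/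
theorem stmt_12 {Ω : Type*} [MeasurableSpace Ω] (P : Measure Ω) [IsProbabilityMeasure P]
    (η : Ω → ℝ) (hη : Measurable η)
    (hη3 : Integrable (fun ω => |η ω| ^ 3) P)
    (μ σ : ℝ) (hσ : 0 < σ)
    (pζ : ℝ → ℝ)
    (hpζ : ∀ z : ℝ, pζ z
      = (Real.sqrt (2 * Real.pi) * σ)⁻¹
          * ∫ ω, Real.exp (-(z - μ - η ω) ^ 2 / (2 * σ ^ 2)) ∂P)
    (m : ℕ → ℝ → ℝ)
    (hm : ∀ (k : ℕ) (z : ℝ), m k z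
      = (∫ ω, (η ω) ^ k * Real.exp (-(z - μ - η ω) ^ 2 / (2 * σ ^ 2)) ∂P)
        / ∫ ω, Real.exp (-(z - μ - η ω) ^ 2 / (2 * σ ^ 2)) ∂P) :
    ∀ z : ℝ, iteratedDeriv 3 (fun t => Real.log (pζ t)) z
      = (1 / σ ^ 6) * (m 3 z - 3 * m 2 z * m 1 z + 2 * (m 1 z) ^ 3) := by
  intro z
  have hc : (Real.sqrt (2 * Real.pi) * σ)⁻¹ ≠ 0 := by positivity
  have hp : pζ = fun t => (Real.sqrt (2 * Real.pi) * σ)⁻¹ * gaussMoment P η μ σ 0 t :=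
    funext fun t => by simp [hpζ, gaussMoment, gaussKernel]
  have hm' : ∀ k, m k z = condMoment P η μ σ k z := fun k => by
    simp [hm, condMoment, gaussMoment, gaussKernel]
  rw [hp, iteratedDeriv_three_log_const_mul_gaussMoment hc hσ hη hη3]
  simp only [hm']
  ring
end

section
/- Let X be a real random variable satisfying: (1) X has a continuously differentiable density p; (2) X is unimodal in the sense that there exists a mode M ∈ ℝ such that sign(p′(x)) = sign(M − x) for all x ∈ ℝ; (3) whenever x₁ < M < x₂ and p(x₁) = p(x₂), one has p′(x₁) > −p′(x₂); and (4) E|X|³ < ∞. Then the third central moment of X is strictly positive: μ₃(X) = E[(X − EX)³] > 0. -/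
/-!
Slicing the density horizontally, `p = ∫₀^{p M} 1_{(a y, b y)} dy` where `(a y, b y) = {p > y}`,
so every moment of `X` is an average over `y` of the moments of Lebesgue measure on
`(a y, b y)`. Unimodality makes `a` increasing, and condition (3) makes the midpoint
`(a + b) / 2` strictly decreasing: reflecting `p` in the midpoint of one chord, (3) says that the
reflected graph can only cross the graph of `p` downwards. With `d` the offset of that midpoint
from the mean `m` and `h` the half-width, the first and third centred moments of the slice are
`2dh` and `2dh(d² + h²)`. The first integrate to zero and `d` changes sign once, from `+` to `-`,
so subtracting `c · 2dh`, with `c` between the values of `d² + h²` on the two sides, leaves a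
nonnegative integrand which is positive where `d > 0`.
-/

open MeasureTheory ProbabilityTheory Real
open Set

theorem Real.sign_eq_one_iff {r : ℝ} : Real.sign r = 1 ↔ 0 < r := by
  refine ⟨fun h => ?_, Real.sign_of_pos⟩
  by_contra! hr
  rcases hr.lt_or_eq with hr | rfl
  · norm_num [Real.sign_of_neg hr] at h
  · norm_num at h

theorem Real.pos_iff_pos_of_sign_eq {r s : ℝ} (h : Real.sign r = Real.sign s) :
    0 < r ↔ 0 < s := by
  rw [← Real.sign_eq_one_iff, h, Real.sign_eq_one_iff]

theorem MeasureTheory.Integrable.exists_lt_of_measure_eq_top {α : Type*} [MeasurableSpace α]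
    {μ : Measure α} {f : α → ℝ} (hf : Integrable f μ) {s : Set α} (hs : μ s = ⊤) {ε : ℝ}
    (hε : 0 < ε) : ∃ x ∈ s, f x < ε := by
  by_contra! h
  exact (hf.measure_norm_ge_lt_top hε).ne
    (measure_mono_top (fun x hx => (h x hx).trans (le_abs_self _)) hs)

theorem integral_indicator_Ioo_zero_const (c : ℝ) {t : ℝ} (ht : 0 ≤ t) :
    ∫ y, (Ioo 0 t).indicator (fun _ => c) y = c * t := by
  rw [integral_indicator_const _ measurableSet_Ioo, Real.volume_real_Ioo_of_le ht, smul_eq_mul,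
    sub_zero, mul_comm]

theorem integral_mul_eq_setIntegral_integral_superlevel {α : Type*} [MeasurableSpace α]
    {μ : Measure α} [SFinite μ] {p f : α → ℝ} (hp : Measurable p) (hp0 : 0 ≤ p)
    (hf : Measurable f) (hfp : Integrable (fun x => f x * p x) μ) :
    IntegrableOn (fun y => ∫ x in {x | y < p x}, f x ∂μ) (Ioi 0) ∧
      ∫ x, f x * p x ∂μ = ∫ y in Ioi 0, ∫ x in {x | y < p x}, f x ∂μ := by
  set A : Set (α × ℝ) := {q | 0 < q.2 ∧ q.2 < p q.1}
  have hA : MeasurableSet A :=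
    (measurableSet_lt measurable_const measurable_snd).inter
      (measurableSet_lt measurable_snd (hp.comp measurable_fst))
  set F : α × ℝ → ℝ := A.indicator fun q => f q.1
  have hFm : AEStronglyMeasurable F (μ.prod volume) :=
    ((hf.comp measurable_fst).indicator hA).aestronglyMeasurable
  have hF_left : ∀ x y, F (x, y) = (Ioo 0 (p x)).indicator (fun _ => f x) y := by
    intro x y
    simp [F, A, indicator_apply]
  have hF_right : ∀ y, ∫ x, F (x, y) ∂μ =
      (Ioi 0).indicator (fun y => ∫ x in {x | y < p x}, f x ∂μ) y := by
    intro y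
    by_cases hy : 0 < y
    · rw [indicator_of_mem (show y ∈ Ioi 0 from hy),
        ← integral_indicator (measurableSet_lt measurable_const hp)]
      congr 1
      ext x
      simp [F, A, indicator_apply, hy]
    · simp [F, A, hy]
  have hFi : Integrable F (μ.prod volume) := by
    refine (integrable_prod_iff hFm).2
      ⟨ae_of_all _ fun x => ?_, hfp.norm.congr (ae_of_all _ fun x => ?_)⟩
    · simp only [hF_left x]
      exact (integrable_indicator_iff measurableSet_Ioo).2
        (integrableOn_const measure_Ioo_lt_top.ne)
    · simp only [hF_left x, norm_indicator_eq_indicator_norm]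
      rw [integral_indicator_Ioo_zero_const _ (hp0 x), norm_mul, Real.norm_of_nonneg (hp0 x)]
  have hswap := integral_integral_swap (f := fun x y => F (x, y)) hFi
  have hGi := hFi.integral_prod_right
  simp only [hF_right, integral_indicator measurableSet_Ioi] at hswap hGi
  simp only [hF_left, integral_indicator_Ioo_zero_const _ (hp0 _)] at hswap
  exact ⟨(integrable_indicator_iff measurableSet_Ioi).1 hGi, hswap⟩

theorem integral_mul_eq_setIntegral_integral_superlevel_of_le {α : Type*} [MeasurableSpace α]
    {μ : Measure α} [SFinite μ] {p f : α → ℝ} (hp : Measurable p) (hp0 : 0 ≤ p) {c : ℝ}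
    (hpc : ∀ x, p x ≤ c) (hf : Measurable f) (hfp : Integrable (fun x => f x * p x) μ) :
    IntegrableOn (fun y => ∫ x in {x | y < p x}, f x ∂μ) (Ioo 0 c) ∧
      ∫ x, f x * p x ∂μ = ∫ y in Ioo 0 c, ∫ x in {x | y < p x}, f x ∂μ := by
  obtain ⟨hi, he⟩ := integral_mul_eq_setIntegral_integral_superlevel hp hp0 hf hfp
  refine ⟨hi.mono_set Ioo_subset_Ioi_self, he.trans ?_⟩
  refine setIntegral_eq_of_subset_of_forall_sdiff_eq_zero measurableSet_Ioi Ioo_subset_Ioi_self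
    fun y hy => ?_
  have hempty : {x | y < p x} = ∅ := eq_empty_of_forall_notMem fun x hx =>
    (hpc x).not_gt (lt_of_le_of_lt (not_lt.1 fun h => hy.2 ⟨hy.1, h⟩) hx)
  simp [hempty]

theorem integral_Ioo_sub_pow {a b : ℝ} (hab : a ≤ b) (m : ℝ) (n : ℕ) :
    ∫ x in Ioo a b, (x - m) ^ n = ((b - m) ^ (n + 1) - (a - m) ^ (n + 1)) / (n + 1) := by
  rw [← integral_Ioc_eq_integral_Ioo, ← intervalIntegral.integral_of_le hab,
    intervalIntegral.integral_comp_sub_right (fun x => x ^ n) m, integral_pow]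

theorem setIntegral_Ioo_pos {f : ℝ → ℝ} {l r t : ℝ} (hlt : l < t) (htr : t ≤ r)
    (hf : IntegrableOn f (Ioo l r)) (hnn : ∀ y ∈ Ioo l r, 0 ≤ f y)
    (hpos : ∀ y ∈ Ioo l t, 0 < f y) : 0 < ∫ y in Ioo l r, f y := by
  rw [setIntegral_pos_iff_support_of_nonneg_ae
    ((ae_restrict_iff' measurableSet_Ioo).2 (ae_of_all _ hnn)) hf]
  calc 0 < volume (Ioo l t) := by simpa using hlt
    _ ≤ volume (Function.support f ∩ Ioo l r) :=
      measure_mono fun y hy => ⟨(hpos y hy).ne', Ioo_subset_Ioo_right htr hy⟩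

theorem sq_add_sq_le_sq_of_sub_le {d h d' h' : ℝ} (hd : d < 0) (hd' : 0 < d') (hh : 0 < h)
    (hle : h - d ≤ h' - d') : d ^ 2 + h ^ 2 ≤ h' ^ 2 := by
  nlinarith

theorem setIntegral_mul_mul_sq_add_sq_pos {d h : ℝ → ℝ} {l r : ℝ} (hlr : l < r)
    (hd : StrictAntiOn d (Ioo l r)) (hh : ∀ y ∈ Ioo l r, 0 < h y)
    (hhd : AntitoneOn (fun y => h y - d y) (Ioo l r))
    (hi1 : IntegrableOn (fun y => d y * h y) (Ioo l r))
    (hi3 : IntegrableOn (fun y => d y * h y * (d y ^ 2 + h y ^ 2)) (Ioo l r))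
    (h1 : ∫ y in Ioo l r, d y * h y = 0) :
    0 < ∫ y in Ioo l r, d y * h y * (d y ^ 2 + h y ^ 2) := by
  set I := Ioo l r
  obtain ⟨t, ht, hdt⟩ : ∃ t ∈ I, 0 < d t := by
    by_contra! hle
    have hpos : ∀ y ∈ I, 0 < -(d y * h y) := fun y hy => by
      have hy' : (l + y) / 2 ∈ I := ⟨by linarith [hy.1], by linarith [hy.1, hy.2]⟩
      have hdy : d y < 0 := (hd hy' hy (by linarith [hy.1])).trans_le (hle _ hy')
      nlinarith [hh y hy]
    have := setIntegral_Ioo_pos (f := fun y => -(d y * h y)) hlr le_rfl hi1.neg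
      (fun y hy => (hpos y hy).le) hpos
    rw [integral_neg, h1, neg_zero] at this
    exact this.false
  -- `c` separates the values of `h ^ 2` where `d > 0` from those of `d ^ 2 + h ^ 2` where `d < 0`
  set c := sInf ((fun y => h y ^ 2) '' {y ∈ I | 0 < d y})
  have hc_le : ∀ y ∈ I, 0 < d y → c ≤ h y ^ 2 := fun y hy hdy =>
    csInf_le ⟨0, by rintro _ ⟨_, _, rfl⟩; positivity⟩ ⟨y, ⟨hy, hdy⟩, rfl⟩
  have hle_c : ∀ y ∈ I, d y < 0 → d y ^ 2 + h y ^ 2 ≤ c := fun y hy hdy =>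
    le_csInf ⟨_, t, ⟨ht, hdt⟩, rfl⟩ <| by
      rintro _ ⟨y', ⟨hy', hdy'⟩, rfl⟩
      have hyy' : y' < y := (hd.lt_iff_gt hy hy').1 (hdy.trans hdy')
      exact sq_add_sq_le_sq_of_sub_le hdy hdy' (hh y hy) (hhd hy' hy hyy'.le)
  have hshift : ∫ y in I, d y * h y * (d y ^ 2 + h y ^ 2) =
      ∫ y in I, (d y * h y * (d y ^ 2 + h y ^ 2) - c * (d y * h y)) := by
    rw [integral_sub hi3 (hi1.const_mul c), integral_const_mul c, h1, mul_zero, sub_zero]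
  rw [hshift]
  refine setIntegral_Ioo_pos ht.1 ht.2.le (hi3.sub (hi1.const_mul c)) (fun y hy => ?_)
    (fun y hy => ?_)
  · rcases lt_trichotomy (d y) 0 with hdy | hdy | hdy
    · nlinarith [hle_c y hy hdy, hh y hy, mul_neg_of_neg_of_pos hdy (hh y hy)]
    · simp [hdy]
    · nlinarith [hc_le y hy hdy, hh y hy, mul_pos hdy (hh y hy)]
  · have hyI : y ∈ I := ⟨hy.1, hy.2.trans ht.2⟩
    have hdy : 0 < d y := hdt.trans (hd hyI ht hy.2)
    have hdh := mul_pos hdy (hh y hyI)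
    nlinarith [mul_nonneg hdh.le (sub_nonneg.2 (hc_le y hyI hdy)), mul_pos hdh (pow_pos hdy 2)]

theorem setIntegral_integral_Ioo_sub_pow_three_pos {a b : ℝ → ℝ} {l r m : ℝ} (hlr : l < r)
    (hab : ∀ y ∈ Ioo l r, a y < b y) (ha : MonotoneOn a (Ioo l r))
    (hsum : StrictAntiOn (a + b) (Ioo l r))
    (hi1 : IntegrableOn (fun y => ∫ x in Ioo (a y) (b y), (x - m)) (Ioo l r))
    (hi3 : IntegrableOn (fun y => ∫ x in Ioo (a y) (b y), (x - m) ^ 3) (Ioo l r))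
    (h1 : ∫ y in Ioo l r, ∫ x in Ioo (a y) (b y), (x - m) = 0) :
    0 < ∫ y in Ioo l r, ∫ x in Ioo (a y) (b y), (x - m) ^ 3 := by
  set I := Ioo l r
  set d : ℝ → ℝ := fun y => (a y + b y) / 2 - m
  set h : ℝ → ℝ := fun y => (b y - a y) / 2
  have hg1 : ∀ y ∈ I, ∫ x in Ioo (a y) (b y), (x - m) = 2 * (d y * h y) := fun y hy => by
    have := integral_Ioo_sub_pow (hab y hy).le m 1
    simp only [pow_one] at this
    rw [this]
    ring
  have hg3 : ∀ y ∈ I, ∫ x in Ioo (a y) (b y), (x - m) ^ 3 =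
      2 * (d y * h y * (d y ^ 2 + h y ^ 2)) := fun y hy => by
    rw [integral_Ioo_sub_pow (hab y hy).le]
    ring
  rw [setIntegral_congr_fun measurableSet_Ioo hg1, integral_const_mul] at h1
  rw [setIntegral_congr_fun measurableSet_Ioo hg3, integral_const_mul]
  refine mul_pos two_pos (setIntegral_mul_mul_sq_add_sq_pos hlr (fun y hy y' hy' hyy' => ?_)
    (fun y hy => ?_) (fun y hy y' hy' hyy' => ?_) ?_ ?_
    ((mul_eq_zero.1 h1).resolve_left two_ne_zero))
  · have := hsum hy hy' hyy'
    simp only [d, Pi.add_apply] at this ⊢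
    linarith
  · simp only [h]
    linarith [hab y hy]
  · simp only [d, h]
    linarith [ha hy hy' hyy']
  · exact (integrable_const_mul_iff two_ne_zero.isUnit _).1 (hi1.congr_fun hg1 measurableSet_Ioo)
  · exact (integrable_const_mul_iff two_ne_zero.isUnit _).1 (hi3.congr_fun hg3 measurableSet_Ioo)

theorem neg_of_deriv_neg_of_eq_zero {φ φ' : ℝ → ℝ} {u v : ℝ} (huv : u < v)
    (hφ : ∀ x ∈ Icc u v, HasDerivAt φ (φ' x) x) (hu : φ u ≤ 0)
    (hzero : ∀ x ∈ Icc u v, φ x = 0 → φ' x < 0) : φ v < 0 := by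
  have hv : v ∈ Icc u v := right_mem_Icc.2 huv.le
  have hle : ∀ x ∈ Icc u v, φ x ≤ 0 :=
    image_le_of_deriv_right_lt_deriv_boundary
      (fun x hx => (hφ x hx).continuousAt.continuousWithinAt)
      (fun x hx => (hφ x (Ico_subset_Icc_self hx)).hasDerivWithinAt) hu
      (fun x => hasDerivAt_const x 0) (fun x hx => hzero x (Ico_subset_Icc_self hx))
  refine (hle v hv).lt_of_ne fun hφv => (hzero v hv hφv).not_ge ?_
  -- `v` maximises `φ` on `[u, v]`, so the difference quotients from the left are nonnegative
  refine ge_of_tendsto ((hasDerivAt_iff_tendsto_slope.1 (hφ v hv)).mono_left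
    (nhdsLT_le_nhdsNE v)) ?_
  filter_upwards [Ioo_mem_nhdsLT huv] with z hz
  rw [slope_def_field, hφv, sub_zero]
  exact div_nonneg_of_nonpos (hle z (Ioo_subset_Icc_self hz)) (sub_nonpos.2 hz.2.le)

section Unimodal

variable {p : ℝ → ℝ} {M : ℝ}

theorem strictMonoOn_Iic_of_sign_deriv (hd : Differentiable ℝ p)
    (hmode : ∀ x, Real.sign (deriv p x) = Real.sign (M - x)) : StrictMonoOn p (Iic M) :=
  strictMonoOn_of_deriv_pos (convex_Iic M) hd.continuous.continuousOn fun x hx => by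
    rw [interior_Iic] at hx
    exact (Real.pos_iff_pos_of_sign_eq (hmode x)).2 (sub_pos.2 hx)

theorem strictAntiOn_Ici_of_sign_deriv (hd : Differentiable ℝ p)
    (hmode : ∀ x, Real.sign (deriv p x) = Real.sign (M - x)) : StrictAntiOn p (Ici M) :=
  strictAntiOn_of_deriv_neg (convex_Ici M) hd.continuous.continuousOn fun x hx => by
    rw [interior_Ici] at hx
    have := Real.pos_iff_pos_of_sign_eq (r := -deriv p x) (s := -(M - x))
      (by rw [Real.sign_neg, Real.sign_neg, hmode x])
    linarith [this.2 (by linarith [mem_Ioi.1 hx])]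

theorem apply_le_of_monotoneOn_of_antitoneOn (hmono : MonotoneOn p (Iic M))
    (hanti : AntitoneOn p (Ici M)) (x : ℝ) : p x ≤ p M := by
  rcases le_total x M with h | h
  · exact hmono h self_mem_Iic h
  · exact hanti self_mem_Ici h h

theorem superlevel_eq_Ioo (hmono : StrictMonoOn p (Iic M)) (hanti : StrictAntiOn p (Ici M))
    {a b : ℝ} (ha : a < M) (hb : M < b) (hab : p a = p b) : {x | p a < p x} = Ioo a b := by
  ext x
  rcases le_total x M with hx | hx
  · rw [mem_ofPred_eq, hmono.lt_iff_lt ha.le hx, mem_Ioo, and_iff_left (hx.trans_lt hb)]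
  · rw [mem_ofPred_eq, hab, hanti.lt_iff_gt hb.le hx, mem_Ioo, and_iff_right (ha.trans_le hx)]

theorem exists_lt_eq_of_mem_Ioo (hc : Continuous p) (hpi : Integrable p) {y : ℝ}
    (hy : y ∈ Ioo 0 (p M)) : ∃ a < M, p a = y := by
  obtain ⟨x, hx, hpx⟩ := hpi.exists_lt_of_measure_eq_top (Real.volume_Iio (a := M)) hy.1
  obtain ⟨a, ha, rfl⟩ := intermediate_value_Ioo (le_of_lt hx) hc.continuousOn ⟨hpx, hy.2⟩
  exact ⟨a, ha.2, rfl⟩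

theorem exists_gt_eq_of_mem_Ioo (hc : Continuous p) (hpi : Integrable p) {y : ℝ}
    (hy : y ∈ Ioo 0 (p M)) : ∃ b > M, p b = y := by
  obtain ⟨x, hx, hpx⟩ := hpi.exists_lt_of_measure_eq_top (Real.volume_Ioi (a := M)) hy.1
  obtain ⟨b, hb, rfl⟩ := intermediate_value_Ioo' (le_of_lt hx) hc.continuousOn ⟨hpx, hy.2⟩
  exact ⟨b, hb.1, rfl⟩

theorem add_lt_add_of_deriv_skew (hd : Differentiable ℝ p) (hmono : StrictMonoOn p (Iic M))
    (hskew : ∀ x₁ x₂ : ℝ, x₁ < M → M < x₂ → p x₁ = p x₂ → -deriv p x₂ < deriv p x₁)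
    {a₁ b₁ a₂ b₂ : ℝ} (ha₁ : a₁ < M) (hb₁ : M < b₁) (ha₂ : a₂ < M) (hb : b₁ < b₂)
    (h₁ : p a₁ = p b₁) (h₂ : p a₂ = p b₂) : a₁ + b₁ < a₂ + b₂ := by
  set s := a₁ + b₁
  have hφ : ∀ x, HasDerivAt (fun x => p (s - x) - p x) (-deriv p (s - x) - deriv p x) x :=
    fun x => ((hd (s - x)).hasDerivAt.comp_const_sub s x).sub (hd x).hasDerivAt
  have hneg : p (s - b₂) - p b₂ < 0 := by
    refine neg_of_deriv_neg_of_eq_zero (φ := fun x => p (s - x) - p x) hb (fun x _ => hφ x)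
      (by simp [s, h₁]) fun x hx hx0 => ?_
    have := hskew (s - x) x (by linarith [hx.1]) (hb₁.trans_le hx.1) (sub_eq_zero.1 hx0)
    linarith
  rw [← h₂] at hneg
  have := (hmono.lt_iff_lt (by simp only [mem_Iic]; linarith) ha₂.le).1 (sub_neg.1 hneg)
  linarith

theorem integral_sub_pow_three_mul_pos (hd : Differentiable ℝ p) (hpi : Integrable p)
    (hp0 : 0 ≤ p) (hmono : StrictMonoOn p (Iic M)) (hanti : StrictAntiOn p (Ici M))
    (hskew : ∀ x₁ x₂ : ℝ, x₁ < M → M < x₂ → p x₁ = p x₂ → -deriv p x₂ < deriv p x₁) {m : ℝ}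
    (hi1 : Integrable (fun x => (x - m) * p x)) (hi3 : Integrable (fun x => (x - m) ^ 3 * p x))
    (h1 : ∫ x, (x - m) * p x = 0) : 0 < ∫ x, (x - m) ^ 3 * p x := by
  set I := Ioo 0 (p M)
  choose! a ha hpa using fun y (hy : y ∈ I) => exists_lt_eq_of_mem_Ioo hd.continuous hpi hy
  choose! b hb hpb using fun y (hy : y ∈ I) => exists_gt_eq_of_mem_Ioo hd.continuous hpi hy
  have hlevel : ∀ y ∈ I, {x | y < p x} = Ioo (a y) (b y) := fun y hy => by
    simpa only [hpa y hy] using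
      superlevel_eq_Ioo hmono hanti (ha y hy) (hb y hy) ((hpa y hy).trans (hpb y hy).symm)
  have hlayer : ∀ f : ℝ → ℝ, Measurable f → Integrable (fun x => f x * p x) →
      IntegrableOn (fun y => ∫ x in Ioo (a y) (b y), f x) I ∧
        ∫ x, f x * p x = ∫ y in I, ∫ x in Ioo (a y) (b y), f x := by
    intro f hf hfp
    obtain ⟨hi, he⟩ := integral_mul_eq_setIntegral_integral_superlevel_of_le
      hd.continuous.measurable hp0
      (apply_le_of_monotoneOn_of_antitoneOn hmono.monotoneOn hanti.antitoneOn) hf hfp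
    have hI : EqOn (fun y => ∫ x in {x | y < p x}, f x)
        (fun y => ∫ x in Ioo (a y) (b y), f x) I := fun y hy => by
      simp only [hlevel y hy]
    exact ⟨hi.congr_fun hI measurableSet_Ioo, he.trans (setIntegral_congr_fun measurableSet_Ioo hI)⟩
  obtain ⟨hi1', he1⟩ := hlayer (fun x => x - m) (measurable_id.sub_const m) hi1
  obtain ⟨hi3', he3⟩ :=
    hlayer (fun x => (x - m) ^ 3) ((measurable_id.sub_const m).pow_const 3) hi3
  rw [he1] at h1
  rw [he3]
  refine setIntegral_integral_Ioo_sub_pow_three_pos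
    ((hp0 (M - 1)).trans_lt (hmono (by simp) self_mem_Iic (by linarith)))
    (fun y hy => (ha y hy).trans (hb y hy)) (fun y hy y' hy' hyy' => ?_)
    (fun y hy y' hy' hyy' => ?_) hi1' hi3' h1
  · exact (hmono.le_iff_le (ha y hy).le (ha y' hy').le).1 (by rwa [hpa y hy, hpa y' hy'])
  · refine add_lt_add_of_deriv_skew hd hmono hskew (ha y' hy') (hb y' hy') (ha y hy) ?_
      ((hpa y' hy').trans (hpb y' hy').symm) ((hpa y hy).trans (hpb y hy).symm)
    exact (hanti.lt_iff_gt (hb y hy).le (hb y' hy').le).1 (by rwa [hpb y hy, hpb y' hy'])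

end Unimodal

section Density

variable {Ω : Type*} [MeasurableSpace Ω] {P : Measure Ω} {X : Ω → ℝ} {p : ℝ → ℝ}

theorem integrable_of_measure_preimage_eq [IsProbabilityMeasure P]
    (hdens : ∀ s : Set ℝ, MeasurableSet s → (P (X ⁻¹' s)).toReal = ∫ x in s, p x) :
    Integrable p := by
  by_contra h
  simpa [integral_undef h] using hdens univ MeasurableSet.univ

theorem nonneg_of_measure_preimage_eq (hc : Continuous p) (hpi : Integrable p)
    (hdens : ∀ s : Set ℝ, MeasurableSet s → (P (X ⁻¹' s)).toReal = ∫ x in s, p x) :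
    0 ≤ p := by
  have hae : ∀ᵐ x, 0 ≤ p x :=
    ae_nonneg_of_forall_setIntegral_nonneg hpi fun s hs _ => hdens s hs ▸ ENNReal.toReal_nonneg
  have hneg : {x | p x < 0} = ∅ :=
    ((isOpen_lt hc continuous_const).measure_eq_zero_iff volume).1 (by simpa [ae_iff] using hae)
  exact fun x => not_lt.1 (eq_empty_iff_forall_notMem.1 hneg x)

theorem map_eq_withDensity_of_measure_preimage_eq [IsFiniteMeasure P] (hX : Measurable X)
    (hpi : Integrable p) (hp0 : 0 ≤ p)
    (hdens : ∀ s : Set ℝ, MeasurableSet s → (P (X ⁻¹' s)).toReal = ∫ x in s, p x) :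
    P.map X = volume.withDensity fun x => ENNReal.ofReal (p x) := by
  ext s hs
  rw [Measure.map_apply hX hs, withDensity_apply _ hs,
    ← ofReal_integral_eq_lintegral_ofReal hpi.integrableOn (ae_of_all _ hp0), ← hdens s hs,
    ENNReal.ofReal_toReal (measure_ne_top P _)]

theorem integral_comp_eq_integral_mul [IsFiniteMeasure P] (hX : Measurable X)
    (hpi : Integrable p) (hp0 : 0 ≤ p)
    (hdens : ∀ s : Set ℝ, MeasurableSet s → (P (X ⁻¹' s)).toReal = ∫ x in s, p x)
    {g : ℝ → ℝ} (hg : Measurable g) (hgX : Integrable (fun ω => g (X ω)) P) :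
    Integrable (fun x => g x * p x) ∧ ∫ ω, g (X ω) ∂P = ∫ x, g x * p x := by
  have hmap := map_eq_withDensity_of_measure_preimage_eq hX hpi hp0 hdens
  have hpm : AEMeasurable fun x => ENNReal.ofReal (p x) := hpi.aemeasurable.ennreal_ofReal
  have hfin : ∀ᵐ x, ENNReal.ofReal (p x) < ⊤ := ae_of_all _ fun _ => ENNReal.ofReal_lt_top
  have hgi := (integrable_map_measure hg.aestronglyMeasurable hX.aemeasurable).2 hgX
  rw [hmap, integrable_withDensity_iff_integrable_smul₀' hpm hfin] at hgi
  refine ⟨by simpa only [ENNReal.toReal_ofReal (hp0 _), smul_eq_mul, mul_comm (p _)] using hgi, ?_⟩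
  rw [← integral_map hX.aemeasurable hg.aestronglyMeasurable, hmap,
    integral_withDensity_eq_integral_toReal_smul₀ hpm hfin]
  simp only [ENNReal.toReal_ofReal (hp0 _), smul_eq_mul, mul_comm (p _)]

end Density

theorem MeasureTheory.MemLp.integrable_sub_const_pow {Ω : Type*} [MeasurableSpace Ω]
    {P : Measure Ω} [IsFiniteMeasure P] {X : Ω → ℝ} {n : ℕ} (hX : MemLp X n P) (c : ℝ) :
    Integrable (fun ω => (X ω - c) ^ n) P :=
  (hX.sub (memLp_const c)).integrable_norm_pow'.mono'
    ((hX.aestronglyMeasurable.sub aestronglyMeasurable_const).pow n)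
    (ae_of_all _ fun ω => by simp [norm_pow])

/-- If a real random variable `X` has a continuously differentiable density `p`
which is unimodal with mode `M` (`sign p′(x) = sign (M − x)`), such that
`p(x₁) = p(x₂)` with `x₁ < M < x₂` implies `p′(x₁) > −p′(x₂)`, and
`E|X|³ < ∞`, then the third central moment of `X` is strictly positive. -/
theorem stmt_13 {Ω : Type*} [MeasurableSpace Ω] (P : Measure Ω) [IsProbabilityMeasure P]
    (X : Ω → ℝ) (hX : Measurable X) (p : ℝ → ℝ)
    (hdens : ∀ s : Set ℝ, MeasurableSet s → (P (X ⁻¹' s)).toReal = ∫ x in s, p x)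
    (hp : ContDiff ℝ 1 p)
    (M : ℝ)
    (hmode : ∀ x : ℝ, Real.sign (deriv p x) = Real.sign (M - x))
    (hskew : ∀ x₁ x₂ : ℝ, x₁ < M → M < x₂ → p x₁ = p x₂ →
      -deriv p x₂ < deriv p x₁)
    (hX3 : Integrable (fun ω => |X ω| ^ 3) P) :
    0 < ∫ ω, (X ω - ∫ ω', X ω' ∂P) ^ 3 ∂P := by
  have hd : Differentiable ℝ p := hp.differentiable one_ne_zero
  have hpi := integrable_of_measure_preimage_eq hdens
  have hp0 := nonneg_of_measure_preimage_eq hd.continuous hpi hdens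
  have hX3' : MemLp X 3 P := by
    rw [← integrable_norm_rpow_iff hX.aestronglyMeasurable (by norm_num) (by norm_num)]
    simpa using hX3
  have hXi : Integrable X P := hX3'.integrable (by norm_num)
  set m := ∫ ω', X ω' ∂P
  obtain ⟨hi1, he1⟩ := integral_comp_eq_integral_mul hX hpi hp0 hdens (g := fun x => x - m)
    (by fun_prop) (hXi.sub (integrable_const m))
  obtain ⟨hi3, he3⟩ := integral_comp_eq_integral_mul hX hpi hp0 hdens
    (g := fun x => (x - m) ^ 3) (by fun_prop) (hX3'.integrable_sub_const_pow m)
  rw [he3]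
  refine integral_sub_pow_three_mul_pos hd hpi hp0 (strictMonoOn_Iic_of_sign_deriv hd hmode)
    (strictAntiOn_Ici_of_sign_deriv hd hmode) hskew hi1 hi3 ?_
  rw [← he1, integral_sub hXi (integrable_const m)]
  simp [m]
end

section
/- Let X be a real random variable with E|X| < ∞ satisfying: (1) X has a continuously differentiable density p; (2) there exists a mode M ∈ ℝ such that sign(p′(x)) = sign(M − x) for all x ∈ ℝ; and (3) whenever x₁ < M < x₂ and p(x₁) = p(x₂), one has p′(x₁) > −p′(x₂). Then E X > M, i.e., the mean strictly exceeds the mode. -/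
/-!
Let `φ x > M` be the point to the right of the mode at the same height as `x < M`. Along the
level sets of `p` we have `φ' = p'(x) / p'(φ x)`, which the skew condition makes `< -1`, so
`x + φ x` is strictly decreasing; as it equals `2M` at `x = M`, we get `φ x > 2M - x`, that is,
`p (M - t) < p (M + t)` for all `t > 0`. Symmetrizing about the mode then gives
`E X - M = ½ ∫ (x - M) (p x - p (2M - x)) dx > 0`.
-/

open MeasureTheory Set Filter Topology

namespace Real

theorem sign_eq_one_iff_s14 {r : ℝ} : sign r = 1 ↔ 0 < r := by
  refine ⟨fun h => ?_, sign_of_pos⟩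
  rcases lt_trichotomy r 0 with hr | rfl | hr
  · norm_num [sign_of_neg hr] at h
  · norm_num [sign_zero] at h
  · exact hr

theorem sign_eq_neg_one_iff {r : ℝ} : sign r = -1 ↔ r < 0 := by
  rw [← neg_pos, ← sign_eq_one_iff_s14, sign_neg, neg_eq_iff_eq_neg]

end Real

theorem nonneg_of_forall_intervalIntegral_nonneg {f : ℝ → ℝ} (hf : Continuous f)
    (h : ∀ a b, a ≤ b → 0 ≤ ∫ x in a..b, f x) : 0 ≤ f := by
  refine fun x => not_lt.1 fun hx => ?_
  obtain ⟨a, b, hxab, hneg⟩ := mem_nhds_iff_exists_Ioo_subset.1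
    ((isOpen_lt hf continuous_const).mem_nhds hx)
  have hab : a < b := hxab.1.trans hxab.2
  have := intervalIntegral.intervalIntegral_pos_of_pos_on (f := fun y => -f y)
    (hf.neg.intervalIntegrable a b)
    (fun y hy => neg_pos.2 (hneg hy)) hab
  rw [intervalIntegral.integral_neg] at this
  linarith [h a b hab.le]

section withDensity

variable {α : Type*} [MeasurableSpace α] {μ : Measure α} {f : α → ℝ}

theorem integrable_withDensity_ofReal_iff (hf : Measurable f) (hf0 : 0 ≤ f) {g : α → ℝ} :
    Integrable g (μ.withDensity fun x => ENNReal.ofReal (f x)) ↔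
      Integrable (fun x => g x * f x) μ := by
  rw [integrable_withDensity_iff_integrable_smul' hf.ennreal_ofReal
    (ae_of_all _ fun _ => ENNReal.ofReal_lt_top)]
  simp only [ENNReal.toReal_ofReal (hf0 _), smul_eq_mul, mul_comm]

theorem integral_withDensity_ofReal (hf : Measurable f) (hf0 : 0 ≤ f) (g : α → ℝ) :
    ∫ x, g x ∂(μ.withDensity fun x => ENNReal.ofReal (f x)) = ∫ x, g x * f x ∂μ := by
  rw [integral_withDensity_eq_integral_toReal_smul hf.ennreal_ofReal
    (ae_of_all _ fun _ => ENNReal.ofReal_lt_top)]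
  simp only [ENNReal.toReal_ofReal (hf0 _), smul_eq_mul, mul_comm]

end withDensity

theorem map_eq_withDensity_ofReal {Ω : Type*} [MeasurableSpace Ω] {P : Measure Ω}
    [IsFiniteMeasure P] {X : Ω → ℝ} (hX : Measurable X) {p : ℝ → ℝ} (hp : Continuous p)
    (hp0 : 0 ≤ p) (hdens : ∀ s, MeasurableSet s → (P (X ⁻¹' s)).toReal = ∫ x in s, p x) :
    P.map X = volume.withDensity fun x => ENNReal.ofReal (p x) := by
  refine Measure.ext_of_Ioc _ _ fun a b _ => ?_
  rw [Measure.map_apply hX measurableSet_Ioc, withDensity_apply _ measurableSet_Ioc,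
    ← ofReal_integral_eq_lintegral_ofReal (hp.integrableOn_Icc.mono_set Ioc_subset_Icc_self)
      (ae_of_all _ hp0), ← hdens _ measurableSet_Ioc, ENNReal.ofReal_toReal (measure_ne_top _ _)]

theorem tendsto_of_strictAntiOn_Ici_comp {α β γ : Type*} [LinearOrder β] [TopologicalSpace β]
    [OrderTopology β] [LinearOrder γ] [TopologicalSpace γ] [OrderTopology γ]
    {l : Filter α} {f : β → γ} {g : α → β} {M c : β} (hf : StrictAntiOn f (Ici M)) (hc : M ≤ c)
    (hg : ∀ᶠ y in l, M ≤ g y) (hfg : Tendsto (f ∘ g) l (𝓝 (f c))) : Tendsto g l (𝓝 c) := by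
  refine tendsto_order.2 ⟨fun a ha => ?_, fun b hb => ?_⟩
  · rcases lt_or_ge a M with haM | haM
    · exact hg.mono fun y hy => haM.trans_le hy
    · filter_upwards [hg, (tendsto_order.1 hfg).2 (f a) (hf haM hc ha)] with y hy hfy
      exact (hf.lt_iff_gt hy haM).1 hfy
  · have hbM : M ≤ b := hc.trans hb.le
    filter_upwards [hg, (tendsto_order.1 hfg).1 (f b) (hf hc hbM hb)] with y hy hfy
    exact (hf.lt_iff_gt hbM hy).1 hfy

section Unimodal

variable {p : ℝ → ℝ} {M : ℝ}

theorem strictAntiOn_add_of_comp_eqOn {φ : ℝ → ℝ} {a : ℝ} (hp : Differentiable ℝ p)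
    (hmono : StrictMonoOn p (Iic M)) (hanti : StrictAntiOn p (Ici M))
    (hdec : ∀ x, M < x → deriv p x < 0)
    (hskew : ∀ x₁ x₂, x₁ < M → M < x₂ → p x₁ = p x₂ → -deriv p x₂ < deriv p x₁)
    (hφ : MapsTo φ (Icc a M) (Ici M)) (hφp : EqOn (p ∘ φ) p (Icc a M)) :
    StrictAntiOn (fun x => φ x + x) (Icc a M) := by
  have hcont : ContinuousOn φ (Icc a M) := fun x hx =>
    tendsto_of_strictAntiOn_Ici_comp hanti (hφ hx) (eventually_nhdsWithin_of_forall hφ) <| by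
      rw [← Function.comp_apply (f := p), hφp hx]
      exact hp.continuous.continuousWithinAt.congr' (eventuallyEq_nhdsWithin_of_eqOn hφp).symm
  have hgt : ∀ x ∈ Ico a M, M < φ x := fun x hx =>
    (hφ (Ico_subset_Icc_self hx)).lt_of_ne fun h => (hmono hx.2.le self_mem_Iic hx.2).ne <|
      by rw [← hφp (Ico_subset_Icc_self hx), Function.comp_apply, ← h]
  refine strictAntiOn_of_deriv_neg (convex_Icc a M) (hcont.add continuousOn_id) fun x hx => ?_
  rw [interior_Icc] at hx
  have hxφ : M < φ x := hgt x (Ioo_subset_Ico_self hx)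
  have hdφ : deriv p (φ x) < 0 := hdec _ hxφ
  have hφ' : HasDerivAt φ (deriv p x / deriv p (φ x)) x :=
    .of_comp_left (hcont.continuousAt (Icc_mem_nhds hx.1 hx.2)) (hp _).hasDerivAt
      (hp x).hasDerivAt hdφ.ne (eventually_of_mem (Icc_mem_nhds hx.1 hx.2) hφp)
  have hslope : deriv p x / deriv p (φ x) < -1 := (div_lt_iff_of_neg hdφ).2 <| by
    linarith [hskew x (φ x) hx.2 hxφ (hφp (Ioo_subset_Icc_self hx)).symm]
  have hF' : HasDerivAt (fun y => φ y + y) (deriv p x / deriv p (φ x) + 1) x :=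
    hφ'.add (hasDerivAt_id' x)
  rw [hF'.deriv]
  linarith

theorem apply_sub_lt_apply_add {t : ℝ} (hp : Differentiable ℝ p)
    (hinc : ∀ x < M, 0 < deriv p x) (hdec : ∀ x, M < x → deriv p x < 0)
    (hskew : ∀ x₁ x₂, x₁ < M → M < x₂ → p x₁ = p x₂ → -deriv p x₂ < deriv p x₁)
    (ht : 0 < t) : p (M - t) < p (M + t) := by
  have hmono : StrictMonoOn p (Iic M) :=
    strictMonoOn_of_deriv_pos (convex_Iic M) hp.continuous.continuousOn (by simpa using hinc)
  have hanti : StrictAntiOn p (Ici M) :=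
    strictAntiOn_of_deriv_neg (convex_Ici M) hp.continuous.continuousOn (by simpa using hdec)
  have hI : M - t ≤ M := by linarith
  by_contra! hle
  -- once `p (M + t) ≤ p (M - t)`, every height taken on `[M - t, M]` is also taken on `[M, M + t]`
  have hmatch : ∀ x ∈ Icc (M - t) M, ∃ z ∈ Icc M (M + t), p z = p x := fun x hx =>
    intermediate_value_Icc' (by linarith) hp.continuous.continuousOn
      ⟨hle.trans (hmono.monotoneOn hI hx.2 hx.1), hmono.monotoneOn hx.2 self_mem_Iic hx.2⟩
  choose! φ hφ hφp using hmatch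
  have hF := strictAntiOn_add_of_comp_eqOn hp hmono hanti hdec hskew (fun x hx => (hφ x hx).1) hφp
  have hM : M ∈ Icc (M - t) M := right_mem_Icc.2 hI
  have hφM : φ M = M := hanti.injOn (hφ M hM).1 self_mem_Ici (hφp M hM)
  have hlt := hF (left_mem_Icc.2 hI) hM (by linarith : M - t < M)
  linarith [(hφ (M - t) (left_mem_Icc.2 hI)).2]

theorem lt_integral_mul_of_apply_sub_lt_apply_add (hp : Integrable p)
    (hxp : Integrable fun x => x * p x) (hone : ∫ x, p x = 1)
    (h : ∀ t, 0 < t → p (M - t) < p (M + t)) : M < ∫ x, x * p x := by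
  set q : ℝ → ℝ := fun x => (x - M) * p x
  have hq : Integrable q :=
    (hxp.sub (hp.const_mul M)).congr (ae_of_all _ fun x => by simp only [Pi.sub_apply, q]; ring)
  have hq_eq : ∫ x, q x = (∫ x, x * p x) - M := by
    simp only [q, sub_mul, integral_sub hxp (hp.const_mul M), integral_const_mul, hone, mul_one]
  have hsym : ∀ x, q x + q (2 * M - x) = (x - M) * (p x - p (2 * M - x)) := fun x => by ring
  have hpos : ∀ x ≠ M, 0 < q x + q (2 * M - x) := by
    intro x hx
    rw [hsym]
    rcases hx.lt_or_gt with hx | hx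
    · have := h (M - x) (by linarith)
      rw [sub_sub_cancel, show M + (M - x) = 2 * M - x by ring] at this
      exact mul_pos_of_neg_of_neg (by linarith) (by linarith)
    · have := h (x - M) (by linarith)
      rw [show M - (x - M) = 2 * M - x by ring, add_sub_cancel] at this
      exact mul_pos (by linarith) (by linarith)
  have hq_refl : Integrable fun x => q (2 * M - x) := hq.comp_sub_left (2 * M)
  have hsum_pos : 0 < ∫ x, q x + q (2 * M - x) := by
    refine (integral_pos_iff_support_of_nonneg (fun x => ?_) (hq.add hq_refl)).2 ?_
    · rcases eq_or_ne x M with rfl | hx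
      · simp [hsym]
      · exact (hpos x hx).le
    · calc (0 : ENNReal) < volume (Ioi M) := by simp
        _ ≤ _ := measure_mono fun x hx => (hpos x (ne_of_gt hx)).ne'
  rw [integral_add hq hq_refl, integral_sub_left_eq_self] at hsum_pos
  linarith

end Unimodal

/-- If an integrable real random variable `X` has a continuously differentiable
density `p` which is unimodal with mode `M` (`sign p′(x) = sign (M − x)`) and
such that `p(x₁) = p(x₂)` with `x₁ < M < x₂` implies `p′(x₁) > −p′(x₂)`, then
the mean of `X` strictly exceeds the mode: `E X > M`. -/
theorem stmt_14 {Ω : Type*} [MeasurableSpace Ω] (P : Measure Ω) [IsProbabilityMeasure P]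
    (X : Ω → ℝ) (hX : Measurable X) (hXint : Integrable X P) (p : ℝ → ℝ)
    (hdens : ∀ s : Set ℝ, MeasurableSet s → (P (X ⁻¹' s)).toReal = ∫ x in s, p x)
    (hp : ContDiff ℝ 1 p)
    (M : ℝ)
    (hmode : ∀ x : ℝ, Real.sign (deriv p x) = Real.sign (M - x))
    (hskew : ∀ x₁ x₂ : ℝ, x₁ < M → M < x₂ → p x₁ = p x₂ →
      -deriv p x₂ < deriv p x₁) :
    M < ∫ ω, X ω ∂P := by
  have hinc : ∀ x < M, 0 < deriv p x := fun x hx =>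
    Real.sign_eq_one_iff_s14.1 <| (hmode x).trans (Real.sign_of_pos (sub_pos.2 hx))
  have hdec : ∀ x, M < x → deriv p x < 0 := fun x hx =>
    Real.sign_eq_neg_one_iff.1 <| (hmode x).trans (Real.sign_of_neg (sub_neg.2 hx))
  have hp0 : 0 ≤ p := nonneg_of_forall_intervalIntegral_nonneg hp.continuous fun a b hab => by
    rw [intervalIntegral.integral_of_le hab, ← hdens _ measurableSet_Ioc]
    exact ENNReal.toReal_nonneg
  have hlaw := map_eq_withDensity_ofReal hX hp.continuous hp0 hdens
  have hintegrable : ∀ g : ℝ → ℝ, Integrable g (P.map X) → Integrable fun x => g x * p x :=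
    fun g hg => (integrable_withDensity_ofReal_iff hp.continuous.measurable hp0).1 (hlaw ▸ hg)
  have hp_int : Integrable p := by simpa using hintegrable 1 (integrable_const 1)
  have hxp_int : Integrable fun x => x * p x :=
    hintegrable id <| (integrable_map_measure aestronglyMeasurable_id hX.aemeasurable).2 hXint
  have hmean : ∫ ω, X ω ∂P = ∫ x, x * p x := by
    have h := integral_map (μ := P) hX.aemeasurable (aestronglyMeasurable_id (μ := P.map X))
    rwa [hlaw, integral_withDensity_ofReal hp.continuous.measurable hp0, eq_comm] at h
  have hone : ∫ x, p x = 1 := by simpa using (hdens univ MeasurableSet.univ).symm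
  rw [hmean]
  exact lt_integral_mul_of_apply_sub_lt_apply_add hp_int hxp_int hone fun t ht =>
    apply_sub_lt_apply_add (hp.differentiable one_ne_zero) hinc hdec hskew ht
end

section
/- Fix x > 0 and σ² > 0, let F(y) = ln(e^y/(e^y + 1)²) − (y − x)²/(2σ²), and let y₀ be the unique zero of F′. Suppose y₃ < y₄ are real numbers with F′(y₃) + F′(y₄) = 0. Then: (1) y₃ < y₀ < y₄ and F′(y₃) = −F′(y₄) > 0; (2) y₃ + y₄ > 0; (3) F″(y₃) < F″(y₄) < 0; and (4) F(y₃) > F(y₄). -/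
/-!
`F′(y) = 1 − 2 sigmoid y − (y − x)/σ²` is strictly decreasing, which gives (1).
If `y₃ + y₄ ≤ 0`, then `sigmoid y₃ + sigmoid y₄ ≤ 1`, and with `x > 0` this makes
`F′(y₃) + F′(y₄)` positive; hence (2). `F″ = −2ρ − 1/σ²`, where the logistic density
`ρ = sigmoid · (1 − sigmoid)` is even and decreasing in `|y|`, so `|y₃| < y₄` gives (3).
For (4), reflect in the midpoint `m` of `[y₃, y₄]`: on `(y₃, m)` the same comparison gives
`F″(t) < F″(y₃ + y₄ − t)`, so `t ↦ F′(t) + F′(y₃ + y₄ − t)` decreases from `0`; therefore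
`t ↦ F(t) − F(y₃ + y₄ − t)` decreases on `[y₃, m]` from `F(y₃) − F(y₄)` to `0`.
-/

open Real Set

section Reflection

variable {f f' f'' : ℝ → ℝ} {a b : ℝ}

lemma lt_of_hasDerivAt_of_add_comp_const_sub_neg (hf : ∀ t, HasDerivAt f (f' t) t) (hab : a < b)
    (hneg : ∀ t ∈ Ioo a ((a + b) / 2), f' t + f' (a + b - t) < 0) : f b < f a := by
  set g : ℝ → ℝ := fun t => f t - f (a + b - t)
  have hg : ∀ t, HasDerivAt g (f' t + f' (a + b - t)) t := fun t =>
    ((hf t).fun_sub ((hf (a + b - t)).comp_const_sub (a + b) t)).congr_deriv (sub_neg_eq_add _ _)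
  have hm : a < (a + b) / 2 := by linarith
  have hanti : StrictAntiOn g (Icc a ((a + b) / 2)) := by
    refine strictAntiOn_of_hasDerivWithinAt_neg (convex_Icc _ _)
      (fun t _ => (hg t).continuousAt.continuousWithinAt) (fun t _ => (hg t).hasDerivWithinAt) ?_
    simpa only [interior_Icc] using hneg
  have := hanti (left_mem_Icc.2 hm.le) (right_mem_Icc.2 hm.le) hm
  simp only [g, add_sub_cancel_left, show a + b - (a + b) / 2 = (a + b) / 2 by ring,
    sub_self] at this
  linarith

lemma add_comp_const_sub_neg_of_hasDerivAt (hf' : ∀ t, HasDerivAt f' (f'' t) t)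
    (h0 : f' a + f' b = 0)
    (h'' : ∀ t ∈ Ioo a ((a + b) / 2), f'' t < f'' (a + b - t)) :
    ∀ t ∈ Ioo a ((a + b) / 2), f' t + f' (a + b - t) < 0 := by
  set φ : ℝ → ℝ := fun t => f' t + f' (a + b - t)
  have hφ : ∀ t, HasDerivAt φ (f'' t - f'' (a + b - t)) t := fun t =>
    ((hf' t).fun_add ((hf' (a + b - t)).comp_const_sub (a + b) t)).congr_deriv
      (sub_eq_add_neg _ _).symm
  have hanti : StrictAntiOn φ (Icc a ((a + b) / 2)) := by
    refine strictAntiOn_of_hasDerivWithinAt_neg (convex_Icc _ _)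
      (fun t _ => (hφ t).continuousAt.continuousWithinAt) (fun t _ => (hφ t).hasDerivWithinAt) ?_
    simpa only [interior_Icc, sub_neg] using h''
  intro t ht
  have := hanti (left_mem_Icc.2 (ht.1.trans ht.2).le) (Ioo_subset_Icc_self ht) ht.1
  simpa only [φ, add_sub_cancel_left, h0] using this

end Reflection

namespace Real

lemma exp_div_exp_add_one_sq (y : ℝ) : exp y / (exp y + 1) ^ 2 = sigmoid y * (1 - sigmoid y) := by
  rw [← sigmoid_neg, sigmoid_def, sigmoid_def, neg_neg, exp_neg]
  field_simp
  ring

lemma sigmoid_add_sigmoid_le_one_iff {a b : ℝ} : sigmoid a + sigmoid b ≤ 1 ↔ a + b ≤ 0 := by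
  rw [← le_sub_iff_add_le', ← sigmoid_neg, sigmoid_le_iff]
  constructor <;> intro <;> linarith

lemma sigmoid_mul_one_sub_sigmoid_lt {a b : ℝ} (hab : a < b) (hs : 0 < a + b) :
    sigmoid b * (1 - sigmoid b) < sigmoid a * (1 - sigmoid a) := by
  have hlt := sigmoid_lt hab
  have hsum : 1 < sigmoid a + sigmoid b := not_le.1 (mt sigmoid_add_sigmoid_le_one_iff.1 hs.not_ge)
  nlinarith

end Real

namespace LogisticGaussian

noncomputable def logPosterior (x v y : ℝ) : ℝ :=
  log (exp y / (exp y + 1) ^ 2) - (y - x) ^ 2 / (2 * v)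

noncomputable def score (x v y : ℝ) : ℝ := 1 - 2 * sigmoid y - (y - x) / v

noncomputable def scoreDeriv (v y : ℝ) : ℝ := -2 * (sigmoid y * (1 - sigmoid y)) - 1 / v

variable {x v a b : ℝ}

lemma hasDerivAt_log_exp_div_exp_add_one_sq (y : ℝ) :
    HasDerivAt (fun y => log (exp y / (exp y + 1) ^ 2)) (1 - 2 * sigmoid y) y := by
  simp only [exp_div_exp_add_one_sq]
  have hpos : 0 < sigmoid y * (1 - sigmoid y) :=
    mul_pos (sigmoid_pos y) (sub_pos.2 (sigmoid_lt_one y))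
  have hprod := (hasDerivAt_sigmoid y).fun_mul ((hasDerivAt_sigmoid y).const_sub 1)
  refine (hprod.log hpos.ne').congr_deriv ?_
  rw [div_eq_iff hpos.ne']
  ring

lemma hasDerivAt_logPosterior (hv : v ≠ 0) (y : ℝ) :
    HasDerivAt (logPosterior x v) (score x v y) y := by
  have hquad := (((hasDerivAt_id y).sub_const x).pow 2).div_const (2 * v)
  refine ((hasDerivAt_log_exp_div_exp_add_one_sq y).sub hquad).congr_deriv ?_
  simp only [score, id]
  field_simp
  ring

lemma hasDerivAt_score (x v y : ℝ) : HasDerivAt (score x v) (scoreDeriv v y) y := by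
  have hquad := ((hasDerivAt_id y).sub_const x).div_const v
  refine (((hasDerivAt_sigmoid y).const_mul 2).const_sub 1 |>.sub hquad).congr_deriv ?_
  simp only [scoreDeriv]
  ring

lemma scoreDeriv_neg (hv : 0 < v) (y : ℝ) : scoreDeriv v y < 0 := by
  have := mul_pos (sigmoid_pos y) (sub_pos.2 (sigmoid_lt_one y))
  have := one_div_pos.2 hv
  simp only [scoreDeriv]
  linarith

lemma strictAnti_score (x : ℝ) (hv : 0 < v) : StrictAnti (score x v) :=
  strictAnti_of_hasDerivAt_neg (hasDerivAt_score x v) (scoreDeriv_neg hv)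

lemma scoreDeriv_lt_scoreDeriv (hab : a < b) (hs : 0 < a + b) :
    scoreDeriv v a < scoreDeriv v b := by
  have := sigmoid_mul_one_sub_sigmoid_lt hab hs
  simp only [scoreDeriv]
  linarith

lemma add_pos_of_score_add_score_eq_zero (hx : 0 < x) (hv : 0 < v)
    (h : score x v a + score x v b = 0) : 0 < a + b := by
  by_contra! hs
  have hsig := sigmoid_add_sigmoid_le_one_iff.2 hs
  have hquad : 0 < (2 * x - (a + b)) / v := div_pos (by linarith) hv
  have : score x v a + score x v b = 2 * (1 - (sigmoid a + sigmoid b)) + (2 * x - (a + b)) / v := by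
    simp only [score]
    ring
  linarith

end LogisticGaussian

open LogisticGaussian in
/-- For fixed `x > 0`, `σ² > 0`,
`F(y) = ln (e^y / (e^y + 1)²) − (y − x)²/(2σ²)`, `y₀` the (unique) zero of `F′`,
and `y₃ < y₄` with `F′(y₃) + F′(y₄) = 0`:
(1) `y₃ < y₀ < y₄` and `F′(y₃) = −F′(y₄) > 0`; (2) `y₃ + y₄ > 0`;
(3) `F″(y₃) < F″(y₄) < 0`; (4) `F(y₃) > F(y₄)`. -/
theorem stmt_16 (x vsq : ℝ) (hx : 0 < x) (hv : 0 < vsq)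
    (F : ℝ → ℝ)
    (hF : ∀ y : ℝ, F y
      = Real.log (Real.exp y / (Real.exp y + 1) ^ 2) - (y - x) ^ 2 / (2 * vsq))
    (y₀ : ℝ) (hy₀ : deriv F y₀ = 0)
    (y₃ y₄ : ℝ) (h34 : y₃ < y₄) (hsum : deriv F y₃ + deriv F y₄ = 0) :
    (y₃ < y₀ ∧ y₀ < y₄ ∧ deriv F y₃ = -deriv F y₄ ∧ 0 < deriv F y₃) ∧
    0 < y₃ + y₄ ∧
    (deriv (deriv F) y₃ < deriv (deriv F) y₄ ∧ deriv (deriv F) y₄ < 0) ∧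
    F y₄ < F y₃ := by
  have hFd : ∀ y, HasDerivAt F (score x vsq y) y := by
    rw [show F = logPosterior x vsq from funext hF]
    exact hasDerivAt_logPosterior hv.ne'
  have hF' : deriv F = score x vsq := funext fun y => (hFd y).deriv
  have hF'' : deriv (score x vsq) = scoreDeriv vsq :=
    funext fun y => (hasDerivAt_score x vsq y).deriv
  rw [hF'] at hy₀ hsum ⊢
  rw [hF'']
  have hanti := strictAnti_score x hv
  have h₃ : 0 < score x vsq y₃ := by linarith [hanti h34]
  have h₄ : score x vsq y₄ < 0 := by linarith [hanti h34]
  have hpos := add_pos_of_score_add_score_eq_zero hx hv hsum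
  refine ⟨⟨hanti.lt_iff_gt.1 (hy₀ ▸ h₃), hanti.lt_iff_gt.1 (hy₀ ▸ h₄), by linarith, h₃⟩, hpos,
    ⟨scoreDeriv_lt_scoreDeriv h34 hpos, scoreDeriv_neg hv y₄⟩, ?_⟩
  refine lt_of_hasDerivAt_of_add_comp_const_sub_neg hFd h34 ?_
  refine add_comp_const_sub_neg_of_hasDerivAt (hasDerivAt_score x vsq) hsum fun t ht => ?_
  exact scoreDeriv_lt_scoreDeriv (by linarith [ht.2]) (by linarith)
end

section
/- Let f(x) = eˣ/(1 + eˣ)² be the standard logistic probability density. Then for every x ∈ ℝ, f‴(x) f(x)² − 3 f″(x) f′(x) f(x) + 2 f′(x)³ = 2 e^{4x}(eˣ − 1)/(1 + eˣ)⁹; in particular, the sign of f‴(x) f(x)² − 3 f″(x) f′(x) f(x) + 2 f′(x)³ equals sign(x). -/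
/-!
With `σ` the logistic sigmoid, the density is `f = σ (1 - σ)` and `σ' = σ (1 - σ)`, so the
derivative of `p(σ)` is `p'(σ) · σ (1 - σ)` and every derivative of `f` is a polynomial in `σ`.
Computing three of them, the expression collapses to `-2 (σ (1 - σ))⁴ (1 - 2σ) = -2 f³ f'`.
Substituting `σ = eˣ / (1 + eˣ)` gives the closed form, whose sign is that of `eˣ - 1`.
-/

open Real Polynomial

namespace Real

lemma sigmoid_eq_exp_div (x : ℝ) : sigmoid x = exp x / (1 + exp x) := by
  rw [sigmoid_def, exp_neg]
  field_simp
  ring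

lemma deriv_eval_sigmoid (p : ℝ[X]) :
    deriv (fun x => p.eval (sigmoid x)) = fun x => (derivative p * (X - X ^ 2)).eval (sigmoid x) := by
  funext x
  have h : HasDerivAt (fun x => p.eval (sigmoid x)) _ x :=
    (p.hasDerivAt (sigmoid x)).comp x (hasDerivAt_sigmoid x)
  rw [h.deriv]
  simp only [eval_mul, eval_sub, eval_pow, eval_X]
  ring

lemma iteratedDeriv_eval_sigmoid (p : ℝ[X]) (n : ℕ) :
    iteratedDeriv n (fun x => p.eval (sigmoid x)) =
      fun x => ((fun q => derivative q * (X - X ^ 2))^[n] p).eval (sigmoid x) := by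
  induction n with
  | zero => rfl
  | succ n ih => rw [iteratedDeriv_succ, ih, deriv_eval_sigmoid, Function.iterate_succ_apply']

lemma sign_mul_of_pos_left {c : ℝ} (hc : 0 < c) (a : ℝ) : sign (c * a) = sign a := by
  have hneg : c * a < 0 ↔ a < 0 := by simpa using mul_lt_mul_iff_right₀ (b := a) (c := 0) hc
  simp only [Real.sign, mul_pos_iff_of_pos_left hc, hneg]

lemma sign_exp_sub_one (x : ℝ) : sign (exp x - 1) = sign x := by
  simp only [Real.sign, sub_pos, one_lt_exp_iff, sub_neg, exp_lt_one_iff]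

end Real

noncomputable def logisticDensity (x : ℝ) : ℝ := exp x / (1 + exp x) ^ 2

-- `f³ · (log f)‴` with the denominators cleared.
noncomputable def thirdLogDerivNumerator (f : ℝ → ℝ) (x : ℝ) : ℝ :=
  iteratedDeriv 3 f x * f x ^ 2 - 3 * iteratedDeriv 2 f x * iteratedDeriv 1 f x * f x
    + 2 * iteratedDeriv 1 f x ^ 3

lemma logisticDensity_eq_eval_sigmoid :
    logisticDensity = fun x => (X - X ^ 2 : ℝ[X]).eval (sigmoid x) := by
  funext x
  simp only [logisticDensity, eval_sub, eval_pow, eval_X, sigmoid_eq_exp_div]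
  field_simp
  ring

lemma thirdLogDerivNumerator_logisticDensity_eq_sigmoid (x : ℝ) :
    thirdLogDerivNumerator logisticDensity x =
      -2 * (sigmoid x * (1 - sigmoid x)) ^ 4 * (1 - 2 * sigmoid x) := by
  simp only [thirdLogDerivNumerator, logisticDensity_eq_eval_sigmoid, iteratedDeriv_eval_sigmoid,
    Function.iterate_succ_apply', Function.iterate_zero_apply]
  simp only [derivative_mul, derivative_sub, derivative_add, derivative_X, derivative_X_pow,
    derivative_one, derivative_C, eval_mul, eval_sub, eval_add, eval_pow, eval_X, eval_one, eval_C,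
    derivative_zero, eval_zero]
  ring

lemma thirdLogDerivNumerator_logisticDensity (x : ℝ) :
    thirdLogDerivNumerator logisticDensity x =
      2 * exp (4 * x) * (exp x - 1) / (1 + exp x) ^ 9 := by
  rw [thirdLogDerivNumerator_logisticDensity_eq_sigmoid, sigmoid_eq_exp_div,
    show 4 * x = x + x + x + x by ring, exp_add, exp_add, exp_add]
  field_simp
  ring

/-- For the standard logistic density `f(x) = eˣ/(1 + eˣ)²`:
`f‴(x) f(x)² − 3 f″(x) f′(x) f(x) + 2 f′(x)³ = 2 e^{4x}(eˣ − 1)/(1 + eˣ)⁹`,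
whose sign equals `sign x`. -/
theorem stmt_18 :
    ∀ x : ℝ,
      iteratedDeriv 3 (fun y : ℝ => Real.exp y / (1 + Real.exp y) ^ 2) x
          * ((fun y : ℝ => Real.exp y / (1 + Real.exp y) ^ 2) x) ^ 2
        - 3 * iteratedDeriv 2 (fun y : ℝ => Real.exp y / (1 + Real.exp y) ^ 2) x
          * iteratedDeriv 1 (fun y : ℝ => Real.exp y / (1 + Real.exp y) ^ 2) x
          * ((fun y : ℝ => Real.exp y / (1 + Real.exp y) ^ 2) x)
        + 2 * (iteratedDeriv 1 (fun y : ℝ => Real.exp y / (1 + Real.exp y) ^ 2) x) ^ 3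
      = 2 * Real.exp (4 * x) * (Real.exp x - 1) / (1 + Real.exp x) ^ 9 ∧
      Real.sign (iteratedDeriv 3 (fun y : ℝ => Real.exp y / (1 + Real.exp y) ^ 2) x
          * ((fun y : ℝ => Real.exp y / (1 + Real.exp y) ^ 2) x) ^ 2
        - 3 * iteratedDeriv 2 (fun y : ℝ => Real.exp y / (1 + Real.exp y) ^ 2) x
          * iteratedDeriv 1 (fun y : ℝ => Real.exp y / (1 + Real.exp y) ^ 2) x
          * ((fun y : ℝ => Real.exp y / (1 + Real.exp y) ^ 2) x)
        + 2 * (iteratedDeriv 1 (fun y : ℝ => Real.exp y / (1 + Real.exp y) ^ 2) x) ^ 3)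
      = Real.sign x := by
  intro x
  change thirdLogDerivNumerator logisticDensity x = _ ∧
    sign (thirdLogDerivNumerator logisticDensity x) = _
  rw [thirdLogDerivNumerator_logisticDensity]
  refine ⟨rfl, ?_⟩
  rw [show 2 * exp (4 * x) * (exp x - 1) / (1 + exp x) ^ 9
      = 2 * exp (4 * x) / (1 + exp x) ^ 9 * (exp x - 1) by ring,
    Real.sign_mul_of_pos_left (by positivity), Real.sign_exp_sub_one]
end
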